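/- arXiv:1604.02014 — 8 statements merged into one kernel-verified Lean document; each statement's English description precedes it below -/
import Mathlib

section
/- There is a constant C > 0 (depending only on d and s) such that for every locally finite Borel measure μ on ℝ^d and every x ∈ ℝ^d, ∫₀^∞ (μ(B(x,r))/r^s)² dr/r ≤ C · Σ_{Q ∈ 𝒟} (μ(Q)/ℓ(Q)^s)² χ_Q(x), where 𝒟 is the lattice of triples of dyadic cubes. Consequently, the Wolff energy 𝒲₂(μ, ℝ^d) = ∫_{ℝ^d} ∫₀^∞ (μ(B(x,r))/r^s)² dr/r dμ(x) is at most C · Σ_{Q ∈ 𝒟} D_μ(Q)² μ(Q), with D_μ(Q) = μ(Q)/ℓ(Q)^s. -/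
open MeasureTheory Metric Set Filter ENNReal
noncomputable section

/-- Points of `ℝ^d` with the Euclidean metric. -/
abbrev Pt (d : ℕ) := EuclideanSpace ℝ (Fin d)

/-- The open cube in `ℝ^d` with center `c` (given coordinatewise) and side length `l`. -/
def cubeSet {d : ℕ} (c : Fin d → ℝ) (l : ℝ) : Set (Pt d) := {x | ∀ i, |x i - c i| < l / 2}

/-- The lattice of concentric triples of standard dyadic cubes, each cube recorded as the
pair (center, side length). -/
def triples (d : ℕ) : Set ((Fin d → ℝ) × ℝ) :=
  {p | ∃ (n : ℤ) (m : Fin d → ℤ), p.2 = 3 * 2 ^ n ∧ ∀ i, p.1 i = (2:ℝ) ^ n * (m i + 1 / 2)}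

/-- The s-dimensional density `μ(Q)/ℓ(Q)^s` of a cube. -/
def DensR {d : ℕ} (μ : Measure (Pt d)) (s : ℝ) (p : (Fin d → ℝ) × ℝ) : ℝ :=
  (μ (cubeSet p.1 p.2)).toReal / p.2 ^ s

/-- `[Q':Q] = |log₂(ℓ(Q')/ℓ(Q))|`, as a function of the two side lengths. -/
def ratio (l l' : ℝ) : ℝ := |Real.logb 2 (l' / l)|

/-- `Q'` dominates `Q` from above: `Q' ⊇ Q` and `D(Q') ≥ 2^{ε[Q':Q]} D(Q)`. -/
def DomAbove {d : ℕ} (μ : Measure (Pt d)) (s ε : ℝ) (Q' Q : (Fin d → ℝ) × ℝ) : Prop :=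
  cubeSet Q.1 Q.2 ⊆ cubeSet Q'.1 Q'.2 ∧
  (2:ℝ) ^ (ε * ratio Q.2 Q'.2) * DensR μ s Q ≤ DensR μ s Q'

/-- The selected cubes: those in the lattice that cannot be dominated from above by
another cube of the lattice. -/
def Dsel {d : ℕ} (μ : Measure (Pt d)) (s ε : ℝ) : Set ((Fin d → ℝ) × ℝ) :=
  {Q ∈ triples d | ¬ ∃ Q' ∈ triples d, Q' ≠ Q ∧ DomAbove μ s ε Q' Q}


/-!
Cut `(0, ∞)` into the dyadic bands `(2ⁿ, 2ⁿ⁺¹]`. For `r` in the `n`-th band the ball `B(x, r)`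
lies in the triple `3Q` of the dyadic cube `Q ∋ x` of side `2ⁿ⁺¹`, whose side `6 · 2ⁿ` is
comparable to `r`, and the measure `dr/r` gives each band mass at most `1`. Different bands
give different triples, so summing over the bands bounds the radial integral by `6^{2s}`
times the dyadic sum at `x`. Integrating this pointwise bound against `μ` gives the energy bound.
-/

def wolffRadial {d : ℕ} (μ : Measure (Pt d)) (s : ℝ) (x : Pt d) : ℝ≥0∞ :=
  ∫⁻ r in Ioi (0:ℝ), (μ (ball x r) / ENNReal.ofReal (r ^ s)) ^ 2 * ENNReal.ofReal r⁻¹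

def cubeDensity {d : ℕ} (μ : Measure (Pt d)) (s : ℝ) (Q : (Fin d → ℝ) × ℝ) : ℝ≥0∞ :=
  μ (cubeSet Q.1 Q.2) / ENNReal.ofReal (Q.2 ^ s)

theorem iUnion_Ioc_zpow_eq_Ioi_zero {b : ℝ} (hb : 1 < b) :
    ⋃ n : ℤ, Ioc (b ^ n) (b ^ (n + 1)) = Ioi 0 := by
  ext r
  simp only [mem_iUnion, mem_Ioi]
  exact ⟨fun ⟨n, hn⟩ => (zpow_pos (zero_lt_one.trans hb) n).trans hn.1,
    fun hr => exists_mem_Ioc_zpow hr hb⟩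

theorem pairwise_disjoint_Ioc_zpow_of_one_lt {b : ℝ} (hb : 1 < b) :
    Pairwise (Function.onFun Disjoint fun n : ℤ => Ioc (b ^ n) (b ^ (n + 1))) := by
  intro m n hmn
  refine disjoint_left.2 fun r hrm hrn => hmn ?_
  have h1 : m < n + 1 := (zpow_lt_zpow_iff_right₀ hb).1 (hrm.1.trans_le hrn.2)
  have h2 : n < m + 1 := (zpow_lt_zpow_iff_right₀ hb).1 (hrn.1.trans_le hrm.2)
  omega

theorem lintegral_Ioi_zero_eq_tsum_Ioc_zpow (f : ℝ → ℝ≥0∞) {b : ℝ} (hb : 1 < b) :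
    ∫⁻ r in Ioi 0, f r = ∑' n : ℤ, ∫⁻ r in Ioc (b ^ n) (b ^ (n + 1)), f r := by
  rw [← iUnion_Ioc_zpow_eq_Ioi_zero hb,
    lintegral_iUnion (fun _ => measurableSet_Ioc) (pairwise_disjoint_Ioc_zpow_of_one_lt hb)]

theorem setLIntegral_Ioc_mul_ofReal_inv_le {f : ℝ → ℝ≥0∞} {a : ℝ} {c : ℝ≥0∞} (ha : 0 < a)
    (hf : ∀ r ∈ Ioc a (2 * a), f r ≤ c) :
    ∫⁻ r in Ioc a (2 * a), f r * ENNReal.ofReal r⁻¹ ≤ c :=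
  calc ∫⁻ r in Ioc a (2 * a), f r * ENNReal.ofReal r⁻¹
      ≤ ∫⁻ _ in Ioc a (2 * a), c * ENNReal.ofReal a⁻¹ :=
        setLIntegral_mono' measurableSet_Ioc fun r hr =>
          mul_le_mul' (hf r hr) (ENNReal.ofReal_le_ofReal (inv_anti₀ ha hr.1.le))
    _ = c := by
      rw [setLIntegral_const, Real.volume_Ioc, mul_assoc,
        ← ENNReal.ofReal_mul (inv_nonneg.2 ha.le),
        show a⁻¹ * (2 * a - a) = 1 by field_simp; ring, ENNReal.ofReal_one, mul_one]

theorem div_ofReal_rpow_le_mul_div_ofReal_rpow {a b : ℝ≥0∞} {ρ r k s : ℝ} (hab : a ≤ b)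
    (hρ : 0 < ρ) (hρr : ρ ≤ r) (hk : 0 < k) (hs : 0 ≤ s) :
    a / ENNReal.ofReal (r ^ s) ≤ ENNReal.ofReal (k ^ s) * (b / ENNReal.ofReal ((k * ρ) ^ s)) := by
  have hks : 0 < k ^ s := Real.rpow_pos_of_pos hk s
  rw [Real.mul_rpow hk.le hρ.le, ENNReal.ofReal_mul hks.le, ← mul_div_assoc,
    ENNReal.mul_div_mul_left _ _ (ENNReal.ofReal_pos.2 hks).ne' ofReal_ne_top]
  exact ENNReal.div_le_div hab (ENNReal.ofReal_le_ofReal (Real.rpow_le_rpow hρ.le hρr hs))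

theorem lintegral_tsum_mul_indicator_one {α ι : Type*} [MeasurableSpace α] [Countable ι]
    (μ : Measure α) {t : ι → Set α} (ht : ∀ i, MeasurableSet (t i)) (a : ι → ℝ≥0∞) :
    ∫⁻ x, ∑' i, a i * (t i).indicator (fun _ => 1) x ∂μ = ∑' i, a i * μ (t i) := by
  rw [lintegral_tsum fun i => ((measurable_const.indicator (ht i)).const_mul (a i)).aemeasurable]
  refine tsum_congr fun i => ?_
  rw [lintegral_const_mul _ (measurable_const.indicator (ht i)), lintegral_indicator (ht i),
    setLIntegral_const, one_mul]

theorem measurableSet_cubeSet {d : ℕ} (c : Fin d → ℝ) (l : ℝ) : MeasurableSet (cubeSet c l) := by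
  have : cubeSet c l = ⋂ i, {x : Pt d | |x i - c i| < l / 2} := by ext; simp [cubeSet]
  rw [this]
  exact MeasurableSet.iInter fun i => measurableSet_lt (by fun_prop) measurable_const

theorem countable_triples (d : ℕ) : (triples d).Countable := by
  refine (countable_range fun p : ℤ × (Fin d → ℤ) =>
    ((fun i => (2:ℝ) ^ p.1 * (p.2 i + 1 / 2)), 3 * (2:ℝ) ^ p.1)).mono ?_
  rintro ⟨c, l⟩ ⟨n, m, hl, hc⟩
  exact ⟨(n, m), Prod.ext (funext fun i => (hc i).symm) hl.symm⟩

/-- The triple of the dyadic cube of side `2 ^ n` containing `x`. -/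
def dyadicTriple {d : ℕ} (x : Pt d) (n : ℤ) : (Fin d → ℝ) × ℝ :=
  (fun i => (2:ℝ) ^ n * (⌊x i / (2:ℝ) ^ n⌋ + 1 / 2), 3 * (2:ℝ) ^ n)

theorem dyadicTriple_mem_triples {d : ℕ} (x : Pt d) (n : ℤ) : dyadicTriple x n ∈ triples d :=
  ⟨n, fun i => ⌊x i / (2:ℝ) ^ n⌋, rfl, fun _ => rfl⟩

theorem dyadicTriple_injective {d : ℕ} (x : Pt d) : Function.Injective (dyadicTriple x) :=
  fun m n h => zpow_right_injective₀ (by norm_num : (0:ℝ) < 2) (by norm_num)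
    (by simpa [dyadicTriple] using congrArg Prod.snd h)

theorem abs_sub_dyadicTriple_fst_le {d : ℕ} (x : Pt d) (n : ℤ) (i : Fin d) :
    |x i - (dyadicTriple x n).1 i| ≤ (2:ℝ) ^ n / 2 := by
  have hT : (0:ℝ) < 2 ^ n := zpow_pos two_pos n
  have hfract : x i - (dyadicTriple x n).1 i = 2 ^ n * (Int.fract (x i / 2 ^ n) - 1 / 2) := by
    simp only [dyadicTriple, Int.fract]
    field_simp
    ring
  have hhalf : |Int.fract (x i / 2 ^ n) - 1 / 2| ≤ 1 / 2 := by
    have h0 := Int.fract_nonneg (x i / 2 ^ n)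
    have h1 := Int.fract_lt_one (x i / 2 ^ n)
    exact abs_le.2 ⟨by linarith, by linarith⟩
  calc |x i - (dyadicTriple x n).1 i| = 2 ^ n * |Int.fract (x i / 2 ^ n) - 1 / 2| := by
        rw [hfract, abs_mul, abs_of_pos hT]
    _ ≤ 2 ^ n * (1 / 2) := by gcongr
    _ = 2 ^ n / 2 := by ring

theorem ball_subset_cubeSet_dyadicTriple {d : ℕ} (x : Pt d) {n : ℤ} {r : ℝ} (hr : r ≤ 2 ^ n) :
    ball x r ⊆ cubeSet (dyadicTriple x n).1 (dyadicTriple x n).2 := by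
  intro y hy i
  calc |y i - (dyadicTriple x n).1 i| ≤ |y i - x i| + |x i - (dyadicTriple x n).1 i| :=
        abs_sub_le _ _ _
    _ < 2 ^ n + 2 ^ n / 2 :=
        add_lt_add_of_lt_of_le ((PiLp.dist_apply_le y x i).trans_lt (hy.trans_le hr))
          (abs_sub_dyadicTriple_fst_le x n i)
    _ = (dyadicTriple x n).2 / 2 := by simp only [dyadicTriple]; ring

theorem mem_cubeSet_dyadicTriple {d : ℕ} (x : Pt d) (n : ℤ) :
    x ∈ cubeSet (dyadicTriple x n).1 (dyadicTriple x n).2 :=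
  ball_subset_cubeSet_dyadicTriple x le_rfl (mem_ball_self (zpow_pos two_pos n))

theorem wolffRadial_band_le {d : ℕ} {s : ℝ} (hs : 0 ≤ s) (μ : Measure (Pt d)) (x : Pt d)
    (n : ℤ) :
    ∫⁻ r in Ioc ((2:ℝ) ^ n) (2 ^ (n + 1)),
        (μ (ball x r) / ENNReal.ofReal (r ^ s)) ^ 2 * ENNReal.ofReal r⁻¹ ≤
      (ENNReal.ofReal (6 ^ s) * cubeDensity μ s (dyadicTriple x (n + 1))) ^ 2 := by
  have h2n : (0:ℝ) < 2 ^ n := zpow_pos two_pos n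
  have hside : (dyadicTriple x (n + 1)).2 = 6 * 2 ^ n := by
    simp only [dyadicTriple, zpow_add_one₀ (two_ne_zero' ℝ)]
    ring
  rw [zpow_add_one₀ (two_ne_zero' ℝ), mul_comm _ (2:ℝ)]
  refine setLIntegral_Ioc_mul_ofReal_inv_le h2n fun r hr => pow_le_pow_left' ?_ 2
  have hball := ball_subset_cubeSet_dyadicTriple x (n := n + 1)
    (hr.2.trans_eq (by rw [zpow_add_one₀ (two_ne_zero' ℝ), mul_comm]))
  rw [hside] at hball
  rw [cubeDensity, hside]
  exact div_ofReal_rpow_le_mul_div_ofReal_rpow (measure_mono hball) h2n hr.1.le (by norm_num) hs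

theorem wolffRadial_le_tsum_cubeDensity {d : ℕ} {s : ℝ} (hs : 0 ≤ s) (μ : Measure (Pt d))
    (x : Pt d) :
    wolffRadial μ s x ≤ ENNReal.ofReal (6 ^ s) ^ 2 *
      ∑' Q : triples d, cubeDensity μ s Q ^ 2 * (cubeSet Q.1.1 Q.1.2).indicator (fun _ => 1) x := by
  let Q : ℤ → triples d := fun n => ⟨dyadicTriple x (n + 1), dyadicTriple_mem_triples x _⟩
  have hQ : Function.Injective Q := fun m n h =>
    add_right_cancel (dyadicTriple_injective x (congrArg Subtype.val h))
  calc wolffRadial μ s x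
      = ∑' n : ℤ, ∫⁻ r in Ioc ((2:ℝ) ^ n) (2 ^ (n + 1)),
          (μ (ball x r) / ENNReal.ofReal (r ^ s)) ^ 2 * ENNReal.ofReal r⁻¹ :=
        lintegral_Ioi_zero_eq_tsum_Ioc_zpow _ one_lt_two
    _ ≤ ∑' n : ℤ, (ENNReal.ofReal (6 ^ s) * cubeDensity μ s (dyadicTriple x (n + 1))) ^ 2 :=
        ENNReal.tsum_le_tsum (wolffRadial_band_le hs μ x)
    _ = ENNReal.ofReal (6 ^ s) ^ 2 * ∑' n : ℤ, cubeDensity μ s (Q n).1 ^ 2 *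
          (cubeSet (Q n).1.1 (Q n).1.2).indicator (fun _ => 1) x := by
        simp only [mul_pow, ENNReal.tsum_mul_left,
          indicator_of_mem (mem_cubeSet_dyadicTriple x _), mul_one, Q]
    _ ≤ _ := by gcongr; exact ENNReal.tsum_comp_le_tsum_of_injective hQ _

theorem wolff_radial_le_dyadic_general (d : ℕ) (s : ℝ) (hs : s ∈ Set.Ioo 0 (d : ℝ)) :
    ∃ C : ℝ≥0∞, 0 < C ∧ C < ⊤ ∧
      ∀ μ : Measure (Pt d), IsLocallyFiniteMeasure μ →
        (∀ x : Pt d,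
          (∫⁻ r in Set.Ioi (0:ℝ),
              (μ (ball x r) / ENNReal.ofReal (r ^ s)) ^ 2 * ENNReal.ofReal r⁻¹) ≤
            C * ∑' Q : triples d,
              (μ (cubeSet Q.1.1 Q.1.2) / ENNReal.ofReal (Q.1.2 ^ s)) ^ 2 *
                (cubeSet Q.1.1 Q.1.2).indicator (fun _ => (1 : ℝ≥0∞)) x) ∧
        (∫⁻ x, (∫⁻ r in Set.Ioi (0:ℝ),
              (μ (ball x r) / ENNReal.ofReal (r ^ s)) ^ 2 * ENNReal.ofReal r⁻¹) ∂μ) ≤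
          C * ∑' Q : triples d,
            (μ (cubeSet Q.1.1 Q.1.2) / ENNReal.ofReal (Q.1.2 ^ s)) ^ 2 *
              μ (cubeSet Q.1.1 Q.1.2) := by
  have hC : 0 < ENNReal.ofReal (6 ^ s) :=
    ENNReal.ofReal_pos.2 (Real.rpow_pos_of_pos (by norm_num) s)
  have pointwise := fun μ : Measure (Pt d) => wolffRadial_le_tsum_cubeDensity hs.1.le μ
  refine ⟨ENNReal.ofReal (6 ^ s) ^ 2, ENNReal.pow_pos hC 2, pow_lt_top ofReal_lt_top,
    fun μ _ => ⟨pointwise μ, ?_⟩⟩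
  have : Countable (triples d) := (countable_triples d).to_subtype
  calc ∫⁻ x, wolffRadial μ s x ∂μ
      ≤ ∫⁻ x, ENNReal.ofReal (6 ^ s) ^ 2 * ∑' Q : triples d,
          cubeDensity μ s Q ^ 2 * (cubeSet Q.1.1 Q.1.2).indicator (fun _ => 1) x ∂μ :=
        lintegral_mono (pointwise μ)
    _ = _ := by
      rw [lintegral_const_mul' _ _ (pow_ne_top ofReal_ne_top),
        lintegral_tsum_mul_indicator_one μ fun Q => measurableSet_cubeSet _ _]
      rfl

/-- Pointwise domination of the radial Wolff integrand by the dyadic one, and the resulting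
bound `𝒲₂(μ, ℝ^d) ≤ C Σ_{Q ∈ 𝒟} D_μ(Q)² μ(Q)`. -/
theorem wolff_radial_le_dyadic (d : ℕ) (hd : 1 ≤ d) (s : ℝ) (hs : s ∈ Set.Ioo 0 (d : ℝ)) :
    ∃ C : ℝ≥0∞, 0 < C ∧ C < ⊤ ∧
      ∀ μ : Measure (Pt d), IsLocallyFiniteMeasure μ →
        (∀ x : Pt d,
          (∫⁻ r in Set.Ioi (0:ℝ),
              (μ (ball x r) / ENNReal.ofReal (r ^ s)) ^ 2 * ENNReal.ofReal r⁻¹) ≤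
            C * ∑' Q : triples d,
              (μ (cubeSet Q.1.1 Q.1.2) / ENNReal.ofReal (Q.1.2 ^ s)) ^ 2 *
                (cubeSet Q.1.1 Q.1.2).indicator (fun _ => (1 : ℝ≥0∞)) x) ∧
        (∫⁻ x, (∫⁻ r in Set.Ioi (0:ℝ),
              (μ (ball x r) / ENNReal.ofReal (r ^ s)) ^ 2 * ENNReal.ofReal r⁻¹) ∂μ) ≤
          C * ∑' Q : triples d,
            (μ (cubeSet Q.1.1 Q.1.2) / ENNReal.ofReal (Q.1.2 ^ s)) ^ 2 *
              μ (cubeSet Q.1.1 Q.1.2) :=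
  wolff_radial_le_dyadic_general d s hs
end
end

section
/- Suppose sup_{Q ∈ 𝒟} D_μ(Q) < ∞. Then every cube Q ∈ 𝒟 ∖ 𝒟_sel(μ) with μ(Q) > 0 is dominated from above by some cube in 𝒟_sel(μ). -/
open MeasureTheory Metric Set Filter ENNReal
noncomputable section

/-!
Two distinct nested lattice cubes differ in side length by a factor of at least `2`, so every
domination step between lattice cubes multiplies the density by at least `2 ^ ε`. Starting from
a cube of positive (finite) density, the uniform bound on densities stops any chain of such steps
after finitely many of them, at a selected cube; it dominates the starting cube because
domination is transitive (the exponents `ε [Q':Q]` are subadditive, as `[Q':Q]` is the distance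
between `log₂ ℓ(Q)` and `log₂ ℓ(Q')`).
-/

def undominated {α : Type*} (S : Set α) (R : α → α → Prop) : Set α :=
  {a ∈ S | ¬ ∃ b ∈ S, b ≠ a ∧ R b a}

theorem exists_mem_undominated_dominating {α : Type*} {S : Set α} {R : α → α → Prop}
    {f : α → ℝ} {c M : ℝ} (hc : 1 < c) (hM : ∀ a ∈ S, f a ≤ M)
    (htrans : ∀ a ∈ S, ∀ b ∈ S, ∀ b' ∈ S, R b a → R b' b → R b' a)
    (hgrow : ∀ a ∈ S, ∀ b ∈ S, b ≠ a → R b a → c * f a ≤ f b)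
    {a : α} (ha : a ∈ S \ undominated S R) (hfa : 0 < f a) :
    ∃ b ∈ undominated S R, b ≠ a ∧ R b a := by
  -- `k` bounds the number of domination steps that can still be taken from `a`.
  have reach : ∀ k : ℕ, ∀ a ∈ S, M < c ^ k * f a → ∃ b ∈ undominated S R, b = a ∨ R b a := by
    intro k
    induction k with
    | zero =>
      intro a ha h
      rw [pow_zero, one_mul] at h
      exact absurd (hM a ha) h.not_ge
    | succ k ih =>
      intro a ha h
      by_cases hu : a ∈ undominated S R
      · exact ⟨a, hu, Or.inl rfl⟩
      obtain ⟨a', ha', hne, hR⟩ : ∃ a' ∈ S, a' ≠ a ∧ R a' a := by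
        simpa only [undominated, mem_sep_iff, ha, true_and, not_not] using hu
      have h' : M < c ^ k * f a' := by
        refine h.trans_le ?_
        rw [pow_succ, mul_assoc]
        gcongr
        exact hgrow a ha a' ha' hne hR
      obtain ⟨b, hb, rfl | hRb⟩ := ih a' ha' h'
      · exact ⟨b, hb, Or.inr hR⟩
      · exact ⟨b, hb, Or.inr (htrans a ha a' ha' b hb.1 hR hRb)⟩
  obtain ⟨k, hk⟩ := pow_unbounded_of_one_lt (M / f a) hc
  obtain ⟨b, hb, rfl | hR⟩ := reach k a ha.1 ((div_lt_iff₀ hfa).1 hk)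
  · exact absurd hb ha.2
  · exact ⟨b, hb, fun h => ha.2 (h ▸ hb), hR⟩

section Cubes

variable {d : ℕ}

lemma cubeSet_eq_preimage_pi (c : Fin d → ℝ) (l : ℝ) :
    cubeSet c l = WithLp.ofLp ⁻¹' univ.pi fun i => Ioo (c i - l / 2) (c i + l / 2) := by
  ext x
  simp only [cubeSet, mem_preimage, mem_univ_pi, mem_Ioo, abs_sub_lt_iff]
  exact forall_congr' fun i =>
    ⟨fun h => ⟨by linarith, by linarith⟩, fun h => ⟨by linarith, by linarith⟩⟩

lemma cubeSet_subset_cubeSet_iff {c c' : Fin d → ℝ} {l l' : ℝ} (hl : 0 < l) :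
    cubeSet c l ⊆ cubeSet c' l' ↔
      ∀ i, c' i - l' / 2 ≤ c i - l / 2 ∧ c i + l / 2 ≤ c' i + l' / 2 := by
  rw [cubeSet_eq_preimage_pi, cubeSet_eq_preimage_pi,
    (WithLp.ofLp_surjective 2).preimage_subset_preimage_iff, pi_subset_pi_iff]
  have hne : (univ.pi fun i => Ioo (c i - l / 2) (c i + l / 2)) ≠ ∅ :=
    (univ_pi_nonempty_iff.2 fun i => nonempty_Ioo.2 (by linarith)).ne_empty
  simp only [mem_univ, true_implies, hne, or_false]
  exact forall_congr' fun i => Ioo_subset_Ioo_iff (by linarith)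

lemma eq_of_cubeSet_subset_cubeSet {c c' : Fin d → ℝ} {l : ℝ} (hl : 0 < l)
    (h : cubeSet c l ⊆ cubeSet c' l) : c = c' :=
  funext fun i => by have := (cubeSet_subset_cubeSet_iff hl).1 h i; linarith

lemma measure_cubeSet_lt_top (μ : Measure (Pt d)) [IsLocallyFiniteMeasure μ] (c : Fin d → ℝ)
    (l : ℝ) : μ (cubeSet c l) < ∞ := by
  have hK : IsCompact
      (WithLp.ofLp ⁻¹' univ.pi fun i => Icc (c i - l / 2) (c i + l / 2) : Set (Pt d)) :=
    (PiLp.homeomorph 2 _).isCompact_preimage.2 (isCompact_univ_pi fun _ => isCompact_Icc)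
  refine (measure_mono ?_).trans_lt hK.measure_lt_top
  rw [cubeSet_eq_preimage_pi]
  exact preimage_mono (pi_mono fun _ _ => Ioo_subset_Icc_self)

end Cubes

lemma ratio_le_add {l l'' l' : ℝ} (hl : l ≠ 0) (hl'' : l'' ≠ 0) (hl' : l' ≠ 0) :
    ratio l l' ≤ ratio l l'' + ratio l'' l' := by
  simp only [ratio, Real.logb_div, *, ne_eq, not_false_eq_true]
  exact (abs_sub_le _ _ _).trans_eq (add_comm _ _)

lemma side_pos_of_mem_triples {d : ℕ} {Q : (Fin d → ℝ) × ℝ} (hQ : Q ∈ triples d) : 0 < Q.2 := by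
  obtain ⟨n, -, hn, -⟩ := hQ
  rw [hn]
  positivity

lemma one_le_ratio_of_mem_triples {d : ℕ} {Q Q' : (Fin d → ℝ) × ℝ} (hQ : Q ∈ triples d)
    (hQ' : Q' ∈ triples d) (hne : Q.2 ≠ Q'.2) : 1 ≤ ratio Q.2 Q'.2 := by
  obtain ⟨n, -, hn, -⟩ := hQ
  obtain ⟨n', -, hn', -⟩ := hQ'
  have hnn : n' - n ≠ 0 := sub_ne_zero.2 fun h => hne (by rw [hn, hn', h])
  have hdiv : Q'.2 / Q.2 = (2 : ℝ) ^ ((n' - n : ℤ) : ℝ) := by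
    rw [hn, hn', Real.rpow_intCast, zpow_sub₀ two_ne_zero]
    field_simp
  rw [ratio, hdiv, Real.logb_rpow two_pos one_lt_two.ne', ← Int.cast_abs]
  exact_mod_cast Int.one_le_abs hnn

section Density

variable {d : ℕ} {μ : Measure (Pt d)} {s ε : ℝ}

lemma densR_nonneg {Q : (Fin d → ℝ) × ℝ} (hQ : 0 ≤ Q.2) : 0 ≤ DensR μ s Q :=
  div_nonneg ENNReal.toReal_nonneg (Real.rpow_nonneg hQ s)

lemma densR_pos [IsLocallyFiniteMeasure μ] {Q : (Fin d → ℝ) × ℝ} (hQ : 0 < Q.2)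
    (hμ : 0 < μ (cubeSet Q.1 Q.2)) : 0 < DensR μ s Q :=
  div_pos (ENNReal.toReal_pos hμ.ne' (measure_cubeSet_lt_top μ Q.1 Q.2).ne)
    (Real.rpow_pos_of_pos hQ s)

lemma DomAbove.trans (hε : 0 ≤ ε) {Q Q'' Q' : (Fin d → ℝ) × ℝ} (hQ : 0 < Q.2)
    (hQ'' : 0 < Q''.2) (hQ' : 0 < Q'.2) (h : DomAbove μ s ε Q'' Q)
    (h' : DomAbove μ s ε Q' Q'') : DomAbove μ s ε Q' Q := by
  refine ⟨h.1.trans h'.1, ?_⟩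
  calc (2 : ℝ) ^ (ε * ratio Q.2 Q'.2) * DensR μ s Q
      ≤ 2 ^ (ε * ratio Q''.2 Q'.2) * (2 ^ (ε * ratio Q.2 Q''.2) * DensR μ s Q) := by
        rw [← mul_assoc, ← Real.rpow_add two_pos, ← mul_add, add_comm]
        gcongr
        · exact densR_nonneg hQ.le
        · exact one_le_two
        · exact ratio_le_add hQ.ne' hQ''.ne' hQ'.ne'
    _ ≤ 2 ^ (ε * ratio Q''.2 Q'.2) * DensR μ s Q'' := by gcongr; exact h.2
    _ ≤ DensR μ s Q' := h'.2

lemma DomAbove.two_rpow_mul_le (hε : 0 ≤ ε) {Q Q' : (Fin d → ℝ) × ℝ} (hQ : Q ∈ triples d)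
    (hQ' : Q' ∈ triples d) (hne : Q' ≠ Q) (h : DomAbove μ s ε Q' Q) :
    2 ^ ε * DensR μ s Q ≤ DensR μ s Q' := by
  have hside : Q.2 ≠ Q'.2 := fun hside => hne <| Prod.ext
    (eq_of_cubeSet_subset_cubeSet (side_pos_of_mem_triples hQ) (hside ▸ h.1)).symm hside.symm
  refine le_trans ?_ h.2
  gcongr
  · exact densR_nonneg (side_pos_of_mem_triples hQ).le
  · exact one_le_two
  · exact le_mul_of_one_le_right hε (one_le_ratio_of_mem_triples hQ hQ' hside)

end Density

theorem dominated_by_selected_general (d : ℕ) (s : ℝ) (ε : ℝ) (hε : 0 < ε)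
    (μ : Measure (Pt d)) (hloc : IsLocallyFiniteMeasure μ)
    (hsup : ∃ M : ℝ, ∀ Q ∈ triples d, DensR μ s Q ≤ M) :
    ∀ Q ∈ triples d \ Dsel μ s ε, 0 < μ (cubeSet Q.1 Q.2) →
      ∃ Q' ∈ Dsel μ s ε, Q' ≠ Q ∧ DomAbove μ s ε Q' Q := by
  intro Q hQ hμ
  obtain ⟨M, hM⟩ := hsup
  have hside {Q : (Fin d → ℝ) × ℝ} (hQ : Q ∈ triples d) : 0 < Q.2 := side_pos_of_mem_triples hQ
  exact exists_mem_undominated_dominating (S := triples d) (R := DomAbove μ s ε)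
    (Real.one_lt_rpow one_lt_two hε) hM
    (fun _ h _ h'' _ h' => DomAbove.trans hε.le (hside h) (hside h'') (hside h'))
    (fun _ h _ h' => DomAbove.two_rpow_mul_le hε.le h h') hQ (densR_pos (hside hQ.1) hμ)

/-- If the densities are uniformly bounded, every non-selected cube of positive measure is
dominated from above by a selected cube. -/
theorem dominated_by_selected (d : ℕ) (s : ℝ) (hs : s ∈ Set.Ioo 0 (d : ℝ)) (ε : ℝ) (hε : 0 < ε)
    (μ : Measure (Pt d)) (hloc : IsLocallyFiniteMeasure μ)
    (hsup : ∃ M : ℝ, ∀ Q ∈ triples d, DensR μ s Q ≤ M) :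
    ∀ Q ∈ triples d \ Dsel μ s ε, 0 < μ (cubeSet Q.1 Q.2) →
      ∃ Q' ∈ Dsel μ s ε, Q' ≠ Q ∧ DomAbove μ s ε Q' Q :=
  dominated_by_selected_general d s ε hε μ hloc hsup
end
end

section
/- (Downward domination lemma) Suppose sup_{Q ∈ 𝒟} D_μ(Q) < ∞. Then there exists c(ε) > 0 such that Σ_{Q ∈ 𝒟̂_sel(μ)} D_μ(Q)² μ(Q) ≥ c(ε) Σ_{Q ∈ 𝒟_sel(μ)} D_μ(Q)² μ(Q). -/
open MeasureTheory Metric Set Filter ENNReal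
noncomputable section

/-- `Q` is dominated from below by the finite bunch `B`: all cubes of the bunch are selected,
have large density relative to `Q`, have disjoint triples contained in `3Q`, and carry a
large portion of the Wolff energy of `Q`. -/
def DomBelow {d : ℕ} (μ : Measure (Pt d)) (s ε : ℝ) (Q : (Fin d → ℝ) × ℝ)
    (B : Finset ((Fin d → ℝ) × ℝ)) : Prop :=
  B.Nonempty ∧
  (∀ P ∈ B, P ∈ Dsel μ s ε) ∧
  (∀ P ∈ B, (2:ℝ) ^ (ε * ratio Q.2 P.2) * DensR μ s Q ≤ DensR μ s P) ∧
  ((B : Set ((Fin d → ℝ) × ℝ)).Pairwise fun P P' =>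
    Disjoint (cubeSet P.1 (3 * P.2)) (cubeSet P'.1 (3 * P'.2))) ∧
  (∀ P ∈ B, cubeSet P.1 (3 * P.2) ⊆ cubeSet Q.1 (3 * Q.2)) ∧
  DensR μ s Q ^ 2 * (μ (cubeSet Q.1 Q.2)).toReal ≤
    ∑ P ∈ B, DensR μ s P ^ 2 * (2:ℝ) ^ (-(2 * ε) * ratio Q.2 P.2) *
      (μ (cubeSet P.1 P.2)).toReal

/-- The doubly selected cubes: selected cubes admitting no dominating bunch from below other
than the trivial bunch `{Q}`. -/
def DhatSel {d : ℕ} (μ : Measure (Pt d)) (s ε : ℝ) : Set ((Fin d → ℝ) × ℝ) :=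
  {Q ∈ Dsel μ s ε | ∀ B, DomBelow μ s ε Q B → B = {Q}}

/-!
A selected cube `Q` that is not doubly selected has a nontrivial dominating bunch; its members
lie strictly below `Q`, so `[Q:P] ≥ 1` and `D(P) ≥ 2^ε D(Q)`. As the densities are bounded, the
bunches can be iterated only finitely often, and unfolding them yields
`D(Q)² μ(Q) ≤ ∑_R 2^{-2ε[Q:R]} D(R)² μ(R)` over doubly selected `R` with `3R ⊆ 3Q`: the weights
multiply along the iteration, and the triples of a bunch are disjoint, so each `R` is reached at
most once. Summing over `Q` and exchanging the sums, it remains to bound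
`∑_{3Q ⊇ 3R} 2^{-2ε[Q:R]}`. In each generation above `R` at most `10^d` cubes `Q` satisfy
`3Q ⊇ 3R`, so this sum is at most `10^d / (1 - 2^{-2ε})`.
-/

lemma toLp_mem_cubeSet {d : ℕ} {c : Fin d → ℝ} {l : ℝ} (hl : 0 < l) :
    WithLp.toLp 2 c ∈ cubeSet c l := fun i => by simpa using hl

lemma abs_sub_le_of_cubeSet_subset {d : ℕ} {c c' : Fin d → ℝ} {l l' : ℝ} (hl : 0 < l)
    (h : cubeSet c l ⊆ cubeSet c' l') (i : Fin d) : |c i - c' i| ≤ (l' - l) / 2 := by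
  have shift : ∀ t, |t| < l / 2 → |c i + t - c' i| < l' / 2 := by
    intro t ht
    have hx : WithLp.toLp 2 (Function.update c i (c i + t)) ∈ cubeSet c l := by
      intro j
      rcases eq_or_ne j i with rfl | hj
      · simpa using ht
      · simpa [hj] using hl
    simpa using h hx i
  have push_out : ∀ t, 0 ≤ t → t < l / 2 → |c i - c' i| + t < l' / 2 := by
    intro t ht htl
    have hplus := abs_lt.1 (shift t (by rwa [abs_of_nonneg ht]))
    have hminus := abs_lt.1 (shift (-t) (by rwa [abs_neg, abs_of_nonneg ht]))
    rcases abs_cases (c i - c' i) with ⟨he, -⟩ | ⟨he, -⟩ <;> rw [he] <;> linarith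
  have : l / 2 ≤ l' / 2 - |c i - c' i| := le_of_forall_lt_imp_le_of_dense fun t ht => by
    linarith [push_out (max t 0) (le_max_right _ _) (max_lt ht (half_pos hl)), le_max_left t 0]
  linarith

lemma le_of_cubeSet_subset {d : ℕ} (hd : 0 < d) {c c' : Fin d → ℝ} {l l' : ℝ} (hl : 0 < l)
    (h : cubeSet c l ⊆ cubeSet c' l') : l ≤ l' := by
  linarith [abs_sub_le_of_cubeSet_subset hl h ⟨0, hd⟩, abs_nonneg (c ⟨0, hd⟩ - c' ⟨0, hd⟩)]

lemma eq_of_cubeSet_subset {d : ℕ} {c c' : Fin d → ℝ} {l : ℝ} (hl : 0 < l)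
    (h : cubeSet c l ⊆ cubeSet c' l) : c = c' := by
  funext i
  have hi := abs_sub_le_of_cubeSet_subset hl h i
  rw [sub_self, zero_div] at hi
  exact sub_eq_zero.1 (abs_nonpos_iff.1 hi)

namespace DownwardDomination

variable {d : ℕ}

def level (Q : (Fin d → ℝ) × ℝ) : ℤ := Int.log 2 (Q.2 / 3)

def index (Q : (Fin d → ℝ) × ℝ) (i : Fin d) : ℤ := ⌊Q.1 i / 2 ^ level Q⌋

def tripleCube (Q : (Fin d → ℝ) × ℝ) : Set (Pt d) := cubeSet Q.1 (3 * Q.2)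

lemma level_eq_of_side_eq {Q : (Fin d → ℝ) × ℝ} {n : ℤ} (h : Q.2 = 3 * 2 ^ n) :
    level Q = n := by
  rw [level, h, mul_div_cancel_left₀ _ three_ne_zero]
  exact Int.log_zpow one_lt_two n

lemma side_eq_of_mem_triples {Q : (Fin d → ℝ) × ℝ} (hQ : Q ∈ triples d) :
    Q.2 = 3 * 2 ^ level Q := by
  obtain ⟨n, -, h2, -⟩ := hQ
  rw [level_eq_of_side_eq h2, h2]

lemma center_eq_of_mem_triples {Q : (Fin d → ℝ) × ℝ} (hQ : Q ∈ triples d) (i : Fin d) :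
    Q.1 i = 2 ^ level Q * (index Q i + 1 / 2) := by
  obtain ⟨n, m, h2, h1⟩ := hQ
  have hm : index Q i = m i := by
    rw [index, level_eq_of_side_eq h2, h1 i, mul_div_cancel_left₀ _ (by positivity),
      Int.floor_eq_iff]
    constructor <;> norm_num
  rw [hm, level_eq_of_side_eq h2, h1 i]

lemma eq_of_level_eq_of_index_eq {Q R : (Fin d → ℝ) × ℝ} (hQ : Q ∈ triples d)
    (hR : R ∈ triples d) (hl : level Q = level R) (hi : index Q = index R) : Q = R :=
  Prod.ext
    (funext fun i => by rw [center_eq_of_mem_triples hQ, center_eq_of_mem_triples hR, hl, hi])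
    (by rw [side_eq_of_mem_triples hQ, side_eq_of_mem_triples hR, hl])

lemma side_pos_of_mem_triples {Q : (Fin d → ℝ) × ℝ} (hQ : Q ∈ triples d) : 0 < Q.2 := by
  rw [side_eq_of_mem_triples hQ]
  positivity

lemma toLp_mem_tripleCube {Q : (Fin d → ℝ) × ℝ} (hQ : Q ∈ triples d) :
    WithLp.toLp 2 Q.1 ∈ tripleCube Q :=
  toLp_mem_cubeSet (by linarith [side_pos_of_mem_triples hQ])

lemma level_le_of_tripleCube_subset (hd : 0 < d) {P Q : (Fin d → ℝ) × ℝ} (hP : P ∈ triples d)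
    (hQ : Q ∈ triples d) (h : tripleCube P ⊆ tripleCube Q) : level P ≤ level Q := by
  have hside := le_of_cubeSet_subset hd (by linarith [side_pos_of_mem_triples hP]) h
  rw [side_eq_of_mem_triples hP, side_eq_of_mem_triples hQ] at hside
  exact (zpow_le_zpow_iff_right₀ (by norm_num : (1 : ℝ) < 2)).1 (by linarith)

lemma level_lt_of_tripleCube_subset (hd : 0 < d) {P Q : (Fin d → ℝ) × ℝ} (hP : P ∈ triples d)
    (hQ : Q ∈ triples d) (h : tripleCube P ⊆ tripleCube Q) (hne : P ≠ Q) :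
    level P < level Q := by
  refine (level_le_of_tripleCube_subset hd hP hQ h).lt_of_ne fun hl => hne ?_
  have hside : P.2 = Q.2 := by rw [side_eq_of_mem_triples hP, side_eq_of_mem_triples hQ, hl]
  rw [tripleCube, tripleCube, hside] at h
  exact Prod.ext (eq_of_cubeSet_subset (by linarith [side_pos_of_mem_triples hQ]) h) hside

lemma ratio_self (l : ℝ) : ratio l l = 0 := by
  rcases eq_or_ne l 0 with rfl | hl <;> simp [ratio, *]

lemma ratio_eq_level_sub {Q R : (Fin d → ℝ) × ℝ} (hQ : Q ∈ triples d) (hR : R ∈ triples d)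
    (h : level R ≤ level Q) : ratio Q.2 R.2 = ((level Q - level R : ℤ) : ℝ) := by
  rw [ratio, side_eq_of_mem_triples hQ, side_eq_of_mem_triples hR,
    mul_div_mul_left _ _ three_ne_zero, ← zpow_sub₀ two_ne_zero, Real.logb, Real.log_zpow,
    mul_div_cancel_right₀ _ (Real.log_pos one_lt_two).ne',
    abs_of_nonpos (by exact_mod_cast sub_nonpos.2 h)]
  push_cast
  ring

lemma index_bounds {Q : (Fin d → ℝ) × ℝ} (hQ : Q ∈ triples d) {c : Fin d → ℝ}
    (hc : WithLp.toLp 2 c ∈ tripleCube Q) (i : Fin d) :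
    ⌈c i / 2 ^ level Q - 5⌉ ≤ index Q i ∧ index Q i ≤ ⌈c i / 2 ^ level Q - 5⌉ + 9 := by
  have hz : (0 : ℝ) < 2 ^ level Q := by positivity
  have hci := abs_lt.1 (by simpa using hc i)
  rw [side_eq_of_mem_triples hQ, center_eq_of_mem_triples hQ] at hci
  have hlow : c i / 2 ^ level Q - 5 ≤ index Q i := by
    rw [sub_le_iff_le_add, div_le_iff₀ hz]
    linarith
  have hup : (index Q i : ℝ) < c i / 2 ^ level Q + 4 := by
    rw [← sub_lt_iff_lt_add, lt_div_iff₀ hz]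
    linarith
  refine ⟨Int.ceil_le.2 hlow, ?_⟩
  have : (index Q i : ℝ) < ⌈c i / 2 ^ level Q - 5⌉ + 9 + 1 := by
    linarith [Int.le_ceil (c i / 2 ^ level Q - 5)]
  exact Int.lt_add_one_iff.1 (by exact_mod_cast this)

lemma densR_nonneg {μ : Measure (Pt d)} {s : ℝ} {Q : (Fin d → ℝ) × ℝ} (hQ : Q ∈ triples d) :
    0 ≤ DensR μ s Q :=
  div_nonneg ENNReal.toReal_nonneg (Real.rpow_nonneg (side_pos_of_mem_triples hQ).le s)

def energy (μ : Measure (Pt d)) (s : ℝ) (Q : (Fin d → ℝ) × ℝ) : ℝ≥0∞ :=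
  ENNReal.ofReal (DensR μ s Q ^ 2) * μ (cubeSet Q.1 Q.2)

lemma ofReal_densR_sq_mul_toReal (μ : Measure (Pt d)) (s : ℝ) (Q : (Fin d → ℝ) × ℝ) :
    ENNReal.ofReal (DensR μ s Q ^ 2 * (μ (cubeSet Q.1 Q.2)).toReal) = energy μ s Q := by
  rcases eq_or_ne (μ (cubeSet Q.1 Q.2)) ∞ with hμ | hμ
  · simp [energy, DensR, hμ]
  · rw [energy, ENNReal.ofReal_mul (sq_nonneg _), ENNReal.ofReal_toReal hμ]

def decay (ε : ℝ) : ℝ≥0∞ := ENNReal.ofReal (2 ^ (-(2 * ε)))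

lemma decay_lt_one {ε : ℝ} (hε : 0 < ε) : decay ε < 1 :=
  ENNReal.ofReal_lt_one.2 (Real.rpow_lt_one_of_one_lt_of_neg (by norm_num) (by linarith))

def weight (ε : ℝ) (Q R : (Fin d → ℝ) × ℝ) : ℝ≥0∞ :=
  ENNReal.ofReal (2 ^ (-(2 * ε) * ratio Q.2 R.2))

lemma weight_eq_decay_pow (ε : ℝ) {Q R : (Fin d → ℝ) × ℝ} (hQ : Q ∈ triples d)
    (hR : R ∈ triples d) (h : level R ≤ level Q) :
    weight ε Q R = decay ε ^ (level Q - level R).toNat := by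
  have hr : ratio Q.2 R.2 = ((level Q - level R).toNat : ℝ) := by
    rw [ratio_eq_level_sub hQ hR h]
    exact_mod_cast (Int.toNat_of_nonneg (sub_nonneg.2 h)).symm
  rw [weight, decay, hr, Real.rpow_mul_natCast (by norm_num),
    ENNReal.ofReal_pow (Real.rpow_nonneg (by norm_num) _)]

lemma weight_mul_weight (ε : ℝ) {P Q R : (Fin d → ℝ) × ℝ} (hQ : Q ∈ triples d)
    (hP : P ∈ triples d) (hR : R ∈ triples d) (hPQ : level P ≤ level Q)
    (hRP : level R ≤ level P) : weight ε Q P * weight ε P R = weight ε Q R := by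
  rw [weight_eq_decay_pow ε hQ hP hPQ, weight_eq_decay_pow ε hP hR hRP,
    weight_eq_decay_pow ε hQ hR (hRP.trans hPQ), ← pow_add]
  congr 1
  omega

open Classical in
def kernel (ε : ℝ) (Q R : (Fin d → ℝ) × ℝ) : ℝ≥0∞ :=
  if tripleCube R ⊆ tripleCube Q then weight ε Q R else 0

lemma kernel_self (ε : ℝ) (Q : (Fin d → ℝ) × ℝ) : kernel ε Q Q = 1 := by
  rw [kernel, if_pos subset_rfl, weight, ratio_self, mul_zero, Real.rpow_zero, ENNReal.ofReal_one]

section Bunch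

variable {μ : Measure (Pt d)} {s ε : ℝ} {Q : (Fin d → ℝ) × ℝ} {B : Finset ((Fin d → ℝ) × ℝ)}

lemma notMem_of_domBelow (hB : DomBelow μ s ε Q B) (hne : B ≠ {Q}) : Q ∉ B := by
  intro hQB
  obtain ⟨-, hsel, -, hdisj, hsub, -⟩ := hB
  refine hne (Finset.eq_singleton_iff_unique_mem.2 ⟨hQB, fun P hP => by_contra fun hPQ => ?_⟩)
  have hx := toLp_mem_tripleCube (hsel P hP).1
  exact disjoint_left.1 (hdisj hP hQB hPQ) hx (hsub P hP hx)

lemma two_rpow_mul_densR_le_of_mem_domBelow (hd : 0 < d) (hε : 0 ≤ ε) (hQ : Q ∈ triples d)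
    (hB : DomBelow μ s ε Q B) (hQB : Q ∉ B) {P : (Fin d → ℝ) × ℝ} (hP : P ∈ B) :
    2 ^ ε * DensR μ s Q ≤ DensR μ s P := by
  have hPt := (hB.2.1 P hP).1
  have hlt := level_lt_of_tripleCube_subset hd hPt hQ (hB.2.2.2.2.1 P hP)
    (ne_of_mem_of_not_mem hP hQB)
  have hr : 1 ≤ ratio Q.2 P.2 := by
    rw [ratio_eq_level_sub hQ hPt hlt.le]
    exact_mod_cast (by omega : (1 : ℤ) ≤ level Q - level P)
  calc 2 ^ ε * DensR μ s Q ≤ 2 ^ (ε * ratio Q.2 P.2) * DensR μ s Q := by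
        gcongr
        · exact densR_nonneg hQ
        · norm_num
        · exact le_mul_of_one_le_right hε hr
    _ ≤ DensR μ s P := hB.2.2.1 P hP

lemma energy_le_sum_weight_mul_energy (hB : DomBelow μ s ε Q B) :
    energy μ s Q ≤ ∑ P ∈ B, weight ε Q P * energy μ s P := by
  rw [← ofReal_densR_sq_mul_toReal]
  refine (ENNReal.ofReal_le_ofReal hB.2.2.2.2.2).trans_eq ?_
  rw [ENNReal.ofReal_sum_of_nonneg fun P _ => by positivity]
  refine Finset.sum_congr rfl fun P _ => ?_
  rw [mul_right_comm, ENNReal.ofReal_mul (by positivity), ofReal_densR_sq_mul_toReal, weight,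
    mul_comm]

lemma sum_weight_mul_kernel_le (hd : 0 < d) (hQ : Q ∈ triples d) (hB : DomBelow μ s ε Q B)
    {R : (Fin d → ℝ) × ℝ} (hR : R ∈ triples d) :
    ∑ P ∈ B, weight ε Q P * kernel ε P R ≤ kernel ε Q R := by
  obtain ⟨-, hsel, -, hdisj, hsub, -⟩ := hB
  by_cases hcov : ∃ P ∈ B, tripleCube R ⊆ tripleCube P
  · obtain ⟨P, hP, hRP⟩ := hcov
    have hPt := (hsel P hP).1
    have hRQ : tripleCube R ⊆ tripleCube Q := hRP.trans (hsub P hP)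
    rw [Finset.sum_eq_single_of_mem P hP ?_, kernel, kernel, if_pos hRP, if_pos hRQ]
    · exact (weight_mul_weight ε hQ hPt hR (level_le_of_tripleCube_subset hd hPt hQ (hsub P hP))
        (level_le_of_tripleCube_subset hd hR hPt hRP)).le
    · intro P' hP' hne
      have hx := toLp_mem_tripleCube hR
      rw [kernel, if_neg fun hRP' => disjoint_left.1 (hdisj hP' hP hne) (hRP' hx) (hRP hx),
        mul_zero]
  · rw [Finset.sum_eq_zero fun P hP => by rw [kernel, if_neg fun h => hcov ⟨P, hP, h⟩, mul_zero]]
    exact zero_le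

end Bunch

section Descent

variable {μ : Measure (Pt d)} {s ε M : ℝ}

lemma energy_le_tsum_kernel_mul_energy_of_lt (hd : 0 < d) (hε : 0 < ε)
    (hM : ∀ Q ∈ triples d, DensR μ s Q ≤ M) (N : ℕ) :
    ∀ Q ∈ Dsel μ s ε, M < (2 ^ ε) ^ N * DensR μ s Q →
      energy μ s Q ≤ ∑' R : DhatSel μ s ε, kernel ε Q R * energy μ s R := by
  induction N with
  | zero =>
    intro Q hQ hMQ
    rw [pow_zero, one_mul] at hMQ
    exact absurd (hM Q hQ.1) hMQ.not_ge
  | succ N ih =>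
    intro Q hQ hMQ
    by_cases hQhat : Q ∈ DhatSel μ s ε
    · calc energy μ s Q = kernel ε Q Q * energy μ s Q := by rw [kernel_self, one_mul]
        _ ≤ _ := ENNReal.le_tsum (⟨Q, hQhat⟩ : DhatSel μ s ε)
    obtain ⟨B, hB, hBQ⟩ : ∃ B, DomBelow μ s ε Q B ∧ B ≠ {Q} := by
      by_contra! h
      exact hQhat ⟨hQ, h⟩
    have hQB := notMem_of_domBelow hB hBQ
    have hbunch : ∀ P ∈ B,
        energy μ s P ≤ ∑' R : DhatSel μ s ε, kernel ε P R * energy μ s R := by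
      refine fun P hP => ih P (hB.2.1 P hP) (hMQ.trans_le ?_)
      rw [pow_succ, mul_assoc]
      gcongr
      exact two_rpow_mul_densR_le_of_mem_domBelow hd hε.le hQ.1 hB hQB hP
    calc energy μ s Q ≤ ∑ P ∈ B, weight ε Q P * energy μ s P :=
          energy_le_sum_weight_mul_energy hB
      _ ≤ ∑ P ∈ B, weight ε Q P * ∑' R : DhatSel μ s ε, kernel ε P R * energy μ s R := by
          gcongr with P hP
          exact hbunch P hP
      _ = ∑' R : DhatSel μ s ε, (∑ P ∈ B, weight ε Q P * kernel ε P R) * energy μ s R := by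
          simp_rw [← ENNReal.tsum_mul_left, Finset.sum_mul, mul_assoc]
          exact (Summable.tsum_finsetSum fun _ _ => ENNReal.summable).symm
      _ ≤ ∑' R : DhatSel μ s ε, kernel ε Q R * energy μ s R :=
          ENNReal.tsum_le_tsum fun R => by
            gcongr
            exact sum_weight_mul_kernel_le hd hQ.1 hB R.2.1.1

lemma energy_le_tsum_kernel_mul_energy (hd : 0 < d) (hε : 0 < ε)
    (hM : ∀ Q ∈ triples d, DensR μ s Q ≤ M) {Q : (Fin d → ℝ) × ℝ} (hQ : Q ∈ Dsel μ s ε) :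
    energy μ s Q ≤ ∑' R : DhatSel μ s ε, kernel ε Q R * energy μ s R := by
  rcases (densR_nonneg (μ := μ) (s := s) hQ.1).eq_or_lt with h0 | hpos
  · simp [energy, ← h0]
  obtain ⟨N, hN⟩ := pow_unbounded_of_one_lt (M / DensR μ s Q) (Real.one_lt_rpow one_lt_two hε)
  exact energy_le_tsum_kernel_mul_energy_of_lt hd hε hM N Q hQ ((div_lt_iff₀ hpos).1 hN)

end Descent

/-- A cube `Q` with `3R ⊆ 3Q` is determined by its height above `R` and, in each coordinate, by
which of the ten admissible values (see `index_bounds`) its index takes. -/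
def codeAbove (R Q : (Fin d → ℝ) × ℝ) : ℕ × (Fin d → Fin 10) :=
  ((level Q - level R).toNat, fun i =>
    ⟨(index Q i - ⌈R.1 i / 2 ^ level Q - 5⌉).toNat % 10, Nat.mod_lt _ (by norm_num)⟩)

lemma codeAbove_injOn (hd : 0 < d) {R : (Fin d → ℝ) × ℝ} (hR : R ∈ triples d) :
    InjOn (codeAbove R) {Q | Q ∈ triples d ∧ tripleCube R ⊆ tripleCube Q} := by
  rintro X ⟨hX, hRX⟩ Y ⟨hY, hRY⟩ h
  have hlX := level_le_of_tripleCube_subset hd hR hX hRX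
  have hlY := level_le_of_tripleCube_subset hd hR hY hRY
  have hl : level X = level Y := by
    have h1 := congrArg Prod.fst h
    simp only [codeAbove] at h1
    omega
  refine eq_of_level_eq_of_index_eq hX hY hl (funext fun i => ?_)
  have h2 := congrArg (fun p => (p.2 i : ℕ)) h
  have bX := index_bounds hX (hRX (toLp_mem_tripleCube hR)) i
  have bY := index_bounds hY (hRY (toLp_mem_tripleCube hR)) i
  simp only [codeAbove] at h2
  rw [hl] at h2 bX
  omega

lemma tsum_pow_fst {ι : Type*} [Fintype ι] (w : ℝ≥0∞) :
    ∑' p : ℕ × ι, w ^ p.1 = Fintype.card ι * (1 - w)⁻¹ := by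
  simp [ENNReal.tsum_prod', ENNReal.tsum_mul_left, ENNReal.tsum_geometric]

lemma tsum_kernel_le (hd : 0 < d) (ε : ℝ) {R : (Fin d → ℝ) × ℝ} (hR : R ∈ triples d)
    {T : Set ((Fin d → ℝ) × ℝ)} (hT : T ⊆ triples d) :
    ∑' Q : T, kernel ε Q R ≤ 10 ^ d * (1 - decay ε)⁻¹ := by
  let S : Set T := {Q | tripleCube R ⊆ tripleCube Q.1}
  have hsupp : Function.support (fun Q : T => kernel ε Q R) ⊆ S := fun Q hQ => by
    by_contra h
    exact hQ (if_neg h)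
  have hinj : Function.Injective fun Q : S => codeAbove R Q.1.1 := fun X Y h =>
    Subtype.ext (Subtype.ext (codeAbove_injOn hd hR ⟨hT X.1.2, X.2⟩ ⟨hT Y.1.2, Y.2⟩ h))
  rw [← tsum_subtype_eq_of_support_subset hsupp]
  calc ∑' Q : S, kernel ε Q R = ∑' Q : S, decay ε ^ (codeAbove R Q.1.1).1 :=
        tsum_congr fun Q => by
          have hQ : tripleCube R ⊆ tripleCube Q.1.1 := Q.2
          rw [kernel, if_pos hQ, weight_eq_decay_pow ε (hT Q.1.2) hR
            (level_le_of_tripleCube_subset hd hR (hT Q.1.2) Q.2)]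
          rfl
    _ ≤ ∑' p : ℕ × (Fin d → Fin 10), decay ε ^ p.1 :=
        ENNReal.tsum_comp_le_tsum_of_injective hinj fun p => decay ε ^ p.1
    _ = 10 ^ d * (1 - decay ε)⁻¹ := by simp [tsum_pow_fst]

lemma tsum_energy_dsel_le (hd : 0 < d) {μ : Measure (Pt d)} {s ε M : ℝ} (hε : 0 < ε)
    (hM : ∀ Q ∈ triples d, DensR μ s Q ≤ M) :
    ∑' Q : Dsel μ s ε, energy μ s Q ≤
      10 ^ d * (1 - decay ε)⁻¹ * ∑' R : DhatSel μ s ε, energy μ s R :=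
  calc ∑' Q : Dsel μ s ε, energy μ s Q
      ≤ ∑' (Q : Dsel μ s ε) (R : DhatSel μ s ε), kernel ε Q.1 R.1 * energy μ s R.1 :=
        ENNReal.tsum_le_tsum fun Q => energy_le_tsum_kernel_mul_energy hd hε hM Q.2
    _ = ∑' R : DhatSel μ s ε, (∑' Q : Dsel μ s ε, kernel ε Q.1 R.1) * energy μ s R.1 := by
        rw [ENNReal.tsum_comm]
        simp_rw [ENNReal.tsum_mul_right]
    _ ≤ ∑' R : DhatSel μ s ε, 10 ^ d * (1 - decay ε)⁻¹ * energy μ s R.1 :=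
        ENNReal.tsum_le_tsum fun R => by
          gcongr
          exact tsum_kernel_le hd ε R.2.1.1 fun Q hQ => hQ.1
    _ = 10 ^ d * (1 - decay ε)⁻¹ * ∑' R : DhatSel μ s ε, energy μ s R :=
        ENNReal.tsum_mul_left

end DownwardDomination

/-- Downward domination lemma: the doubly selected cubes carry a fixed proportion of the
Wolff energy of the selected cubes. -/
theorem downward_domination (d : ℕ) (s : ℝ) (hs : s ∈ Set.Ioo 0 (d : ℝ)) (ε : ℝ) (hε : 0 < ε) :
    ∃ c : ℝ, 0 < c ∧
      ∀ μ : Measure (Pt d), IsLocallyFiniteMeasure μ →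
        (∃ M : ℝ, ∀ Q ∈ triples d, DensR μ s Q ≤ M) →
        ENNReal.ofReal c *
            ∑' Q : Dsel μ s ε,
              ENNReal.ofReal (DensR μ s Q.1 ^ 2) * μ (cubeSet Q.1.1 Q.1.2) ≤
          ∑' Q : DhatSel μ s ε,
            ENNReal.ofReal (DensR μ s Q.1 ^ 2) * μ (cubeSet Q.1.1 Q.1.2) := by
  have hd : 0 < d := by exact_mod_cast hs.1.trans hs.2
  set K : ℝ≥0∞ := 10 ^ d * (1 - DownwardDomination.decay ε)⁻¹
  have hK0 : K ≠ 0 := mul_ne_zero (pow_ne_zero _ (by norm_num))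
    (ENNReal.inv_ne_zero.2 (ENNReal.sub_ne_top one_ne_top))
  have hKtop : K ≠ ∞ := ENNReal.mul_ne_top (ENNReal.pow_ne_top (by norm_num))
    (ENNReal.inv_ne_top.2 (tsub_pos_of_lt (DownwardDomination.decay_lt_one hε)).ne')
  refine ⟨K⁻¹.toReal,
    ENNReal.toReal_pos (ENNReal.inv_ne_zero.2 hKtop) (ENNReal.inv_ne_top.2 hK0), ?_⟩
  rintro μ - ⟨M, hM⟩
  rw [ENNReal.ofReal_toReal (ENNReal.inv_ne_top.2 hK0), ENNReal.inv_mul_le_iff hK0 hKtop]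
  exact DownwardDomination.tsum_energy_dsel_le hd hε hM
end
end

section
/- Let μ be a smoothly reflectionless measure on ℝ^d. Then for every open ball B ⊂ ℝ^d there is a constant Λ_B ∈ ℝ such that μ(x+B) − μ(x−B) = Λ_B for all x ∈ supp(μ). -/
/-!
The Lipschitz bumps `ψₙ z = min 1 (n · (r - ‖z‖)⁺)` are even and increase to the indicator of
`B(0, r)`, so `z ↦ ψₙ (z + x₀) - ψₙ (z - x₀)` is an admissible odd test function. By monotone
convergence (μ is finite on balls) its convolution with μ at `x` tends to
`μ(B(x + x₀, r)) - μ(B(x - x₀, r))`, and a pointwise limit of functions that are constant on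
`supp μ` is constant there.
-/

open MeasureTheory Metric Set Filter
noncomputable section

/-- The closed support of a measure: points all of whose balls have positive measure. -/
def msupp {d : ℕ} (μ : Measure (Pt d)) : Set (Pt d) :=
  {x | ∀ r : ℝ, 0 < r → 0 < μ (ball x r)}

/-- `μ` is smoothly reflectionless: for every odd compactly supported Lipschitz function `φ`,
the convolution `φ * μ` is constant on the support of `μ`. -/
def SmoothlyReflectionless {d : ℕ} (μ : Measure (Pt d)) : Prop :=
  ∀ φ : Pt d → ℝ, (∀ x, φ (-x) = -φ x) → HasCompactSupport φ →
    (∃ K : NNReal, LipschitzWith K φ) →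
    ∃ Λ : ℝ, ∀ x ∈ msupp μ, (∫ y, φ (x - y) ∂μ) = Λ

open Topology

def ballBump {E : Type*} [SeminormedAddGroup E] (r : ℝ) (n : ℕ) (z : E) : ℝ :=
  min 1 (n * max (r - ‖z‖) 0)

section ballBump

variable {E : Type*} [SeminormedAddGroup E] {r : ℝ} {z : E}

lemma ballBump_neg (r : ℝ) (n : ℕ) (z : E) : ballBump r n (-z) = ballBump r n z := by
  simp only [ballBump, norm_neg]

lemma ballBump_eq_zero_of_le_norm (n : ℕ) (hz : r ≤ ‖z‖) : ballBump r n z = 0 := by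
  simp [ballBump, max_eq_right (sub_nonpos.2 hz)]

lemma lipschitzWith_ballBump (r : ℝ) (n : ℕ) : LipschitzWith n (ballBump r n : E → ℝ) := by
  unfold ballBump
  have hdist : LipschitzWith 1 fun z : E => max (r - ‖z‖) 0 := by
    simpa using ((LipschitzWith.const r).sub lipschitzWith_one_norm).max_const 0
  simpa using ((lipschitzWith_smul (n : ℝ)).comp hdist).const_min 1

lemma hasCompactSupport_ballBump [ProperSpace E] (r : ℝ) (n : ℕ) :
    HasCompactSupport (ballBump r n : E → ℝ) :=
  .intro (isCompact_closedBall 0 r) fun _ hz ↦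
    ballBump_eq_zero_of_le_norm n (le_of_lt (by simpa using hz))

lemma monotone_ballBump (r : ℝ) (z : E) : Monotone fun n : ℕ ↦ ballBump r n z :=
  fun _ _ hmn ↦ min_le_min le_rfl <|
    mul_le_mul_of_nonneg_right (Nat.cast_le.2 hmn) (le_max_right _ _)

lemma tendsto_ballBump (r : ℝ) (z : E) :
    Tendsto (fun n : ℕ ↦ ballBump r n z) atTop (𝓝 ((ball 0 r).indicator 1 z)) := by
  by_cases hz : z ∈ ball 0 r
  · have hpos : 0 < r - ‖z‖ := sub_pos.2 (mem_ball_zero_iff.1 hz)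
    have hone : ∀ᶠ n : ℕ in atTop, ballBump r n z = 1 := by
      filter_upwards [(tendsto_natCast_atTop_atTop.atTop_mul_const hpos).eventually_ge_atTop 1]
        with n hn
      simpa [ballBump, max_eq_left hpos.le] using hn
    rw [indicator_of_mem hz]
    exact tendsto_const_nhds.congr' (hone.mono fun _ h ↦ h.symm)
  · have hle : r ≤ ‖z‖ := by simpa using hz
    simp only [indicator_of_notMem hz, ballBump_eq_zero_of_le_norm _ hle, tendsto_const_nhds]

end ballBump

section integral

variable {E : Type*} [SeminormedAddCommGroup E] [MeasurableSpace E] [BorelSpace E] [ProperSpace E]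
  (μ : Measure E) [IsFiniteMeasureOnCompacts μ]

lemma integrable_ballBump_sub (r : ℝ) (n : ℕ) (c : E) :
    Integrable (fun y ↦ ballBump r n (c - y)) μ :=
  ((lipschitzWith_ballBump r n).continuous.comp (continuous_const.sub continuous_id))
    |>.integrable_of_hasCompactSupport
      ((hasCompactSupport_ballBump r n).comp_homeomorph (Homeomorph.subLeft c))

lemma tendsto_integral_ballBump_sub (r : ℝ) (c : E) :
    Tendsto (fun n : ℕ ↦ ∫ y, ballBump r n (c - y) ∂μ) atTop (𝓝 (μ.real (ball c r))) := by
  have hball : (c - ·) ⁻¹' ball (0 : E) r = ball c r := by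
    ext y; simp [dist_eq_norm, norm_sub_rev]
  have hlim : ∀ y, Tendsto (fun n : ℕ ↦ ballBump r n (c - y)) atTop
      (𝓝 ((ball c r).indicator 1 y)) := fun y ↦ by
    simpa [← hball, ← indicator_comp_right] using tendsto_ballBump r (c - y)
  rw [← integral_indicator_one measurableSet_ball]
  exact integral_tendsto_of_tendsto_of_monotone (fun n ↦ integrable_ballBump_sub μ r n c)
    ((integrable_indicator_iff measurableSet_ball).2 (integrableOn_const measure_ball_lt_top.ne))
    (ae_of_all _ fun y ↦ monotone_ballBump r (c - y)) (ae_of_all _ hlim)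

end integral

lemma SmoothlyReflectionless.exists_integral_sub_translates_eq {d : ℕ} {μ : Measure (Pt d)}
    (hμ : SmoothlyReflectionless μ) {g : Pt d → ℝ} {K : NNReal} (heven : ∀ z, g (-z) = g z)
    (hg : HasCompactSupport g) (hlip : LipschitzWith K g) (a : Pt d) :
    ∃ Λ : ℝ, ∀ x ∈ msupp μ, ∫ y, (g (x - y + a) - g (x - y - a)) ∂μ = Λ := by
  refine hμ (fun z ↦ g (z + a) - g (z - a)) (fun z ↦ ?_)
    ((hg.comp_homeomorph (Homeomorph.addRight a)).sub
      (hg.comp_homeomorph (Homeomorph.subRight a)))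
    ⟨_, (hlip.comp (IsometryEquiv.addRight a).isometry.lipschitz).sub
      (hlip.comp (IsometryEquiv.subRight a).isometry.lipschitz)⟩
  rw [show -z + a = -(z - a) by abel, show -z - a = -(z + a) by abel, heven, heven, neg_sub]

lemma exists_forall_eq_of_tendsto {ι α β : Type*} [TopologicalSpace β] [T2Space β]
    {l : Filter ι} [l.NeBot] {S : Set α} {F : ι → α → β} {c : ι → β} {L : α → β}
    (hF : ∀ i, ∀ x ∈ S, F i x = c i) (hL : ∀ x ∈ S, Tendsto (F · x) l (𝓝 (L x))) :
    ∃ Λ, ∀ x ∈ S, L x = Λ := by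
  rcases S.eq_empty_or_nonempty with rfl | ⟨x₁, hx₁⟩
  · obtain ⟨i⟩ := l.nonempty_of_neBot
    exact ⟨c i, by simp⟩
  refine ⟨L x₁, fun x hx ↦ tendsto_nhds_unique ?_ ((hL x₁ hx₁).congr (hF · x₁ hx₁))⟩
  exact (hL x hx).congr (hF · x hx)

/-- For a smoothly reflectionless measure, for every open ball `B = B(x₀,r)` there is a
constant `Λ_B` with `μ(x+B) − μ(x−B) = Λ_B` for all `x ∈ supp μ`. -/
theorem reflectionless_ball_constant (d : ℕ) (μ : Measure (Pt d))
    (hloc : IsLocallyFiniteMeasure μ) (hrefl : SmoothlyReflectionless μ) :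
    ∀ (x₀ : Pt d) (r : ℝ), 0 < r →
      ∃ Λ : ℝ, ∀ x ∈ msupp μ,
        (μ (ball (x + x₀) r)).toReal - (μ (ball (x - x₀) r)).toReal = Λ := by
  intro x₀ r _
  choose Λ hΛ using fun n : ℕ ↦ hrefl.exists_integral_sub_translates_eq (ballBump_neg r n)
    (hasCompactSupport_ballBump r n) (lipschitzWith_ballBump r n) x₀
  refine exists_forall_eq_of_tendsto (l := atTop) hΛ fun x _ ↦ ?_
  have hsplit : ∀ n : ℕ, ∫ y, (ballBump r n (x - y + x₀) - ballBump r n (x - y - x₀)) ∂μ =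
      ∫ y, ballBump r n (x + x₀ - y) ∂μ - ∫ y, ballBump r n (x - x₀ - y) ∂μ := fun n ↦ by
    simp only [sub_add_eq_add_sub, sub_right_comm x]
    exact integral_sub (integrable_ballBump_sub μ r n _) (integrable_ballBump_sub μ r n _)
  simp only [hsplit]
  exact (tendsto_integral_ballBump_sub μ r _).sub (tendsto_integral_ballBump_sub μ r _)
end
end

section
/- (Two-point lemma) Let μ be a smoothly reflectionless measure and x, y ∈ supp(μ), z = y − x. Then x + kz ∈ supp(μ) for every k ∈ ℤ, and moreover μ(B(x + 2kz, r)) = μ(B(x, r)) for every k ∈ ℤ and r > 0. -/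
open MeasureTheory Metric Set Filter
noncomputable section

/-!
Testing reflectionlessness against odd Lipschitz cutoffs of `𝟙_{B(c,r)} - 𝟙_{B(-c,r)}` and
letting them increase to the indicators shows that `μ(B(p - c, r)) - μ(B(p + c, r))` is the same
for all `p ∈ supp μ`. For two consecutive support points on the line `x + ℤz`, this says that the
masses `a n = μ(B(x + nz, r))` are balanced: `a (j - k) + a (j + 1 + k)` does not depend on `k`.
Two overlapping balanced pairs make `a (n + 2) - a n` constant, hence zero because `a ≥ 0`.
If `x - z` were outside the support, balancing about `x + z/2` would put `x + 2z` in the support,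
and 2-periodicity would then give `μ(B(x - z, r)) = μ(B(x + z, r)) > 0`; so the support propagates
along the line in both directions.
-/

open Topology

def ballCutoff (r : ℝ) (n : ℕ) (t : ℝ) : ℝ := max 0 (min 1 ((n + 1) * (r - t)))

namespace ballCutoff

variable {r : ℝ} {n : ℕ} {t : ℝ}

lemma lipschitzWith (r : ℝ) (n : ℕ) : LipschitzWith (n + 1) (ballCutoff r n) :=
  ((((lipschitzWith_smul (n + 1 : ℝ)).comp
    ((LipschitzWith.const r).sub LipschitzWith.id)).const_min 1).const_max 0).weaken <| by
      rw [zero_add, mul_one, ← NNReal.coe_le_coe]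
      simp [Real.norm_of_nonneg (by positivity : (0 : ℝ) ≤ n + 1)]

lemma nonneg : 0 ≤ ballCutoff r n t := le_max_left _ _

lemma le_one : ballCutoff r n t ≤ 1 := max_le zero_le_one (min_le_left _ _)

lemma eq_zero (h : r ≤ t) : ballCutoff r n t = 0 :=
  max_eq_left <| (min_le_right _ _).trans <|
    mul_nonpos_of_nonneg_of_nonpos (by positivity) (sub_nonpos.2 h)

lemma eventually_eq_one (h : t < r) : ∀ᶠ n : ℕ in atTop, ballCutoff r n t = 1 := by
  have hpos : 0 < r - t := sub_pos.2 h
  have hlarge : Tendsto (fun n : ℕ => ((n : ℝ) + 1) * (r - t)) atTop atTop :=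
    (tendsto_natCast_atTop_atTop.atTop_add tendsto_const_nhds).atTop_mul_const hpos
  filter_upwards [hlarge.eventually_ge_atTop 1] with n hn
  simp [ballCutoff, min_eq_left hn]

end ballCutoff

section Cutoff

variable {X : Type*} [PseudoMetricSpace X]

lemma ballCutoff_dist_le_indicator (q : X) (r : ℝ) (n : ℕ) (w : X) :
    ballCutoff r n (dist w q) ≤ (ball q r).indicator 1 w := by
  by_cases hw : w ∈ ball q r
  · simpa [indicator_of_mem hw] using ballCutoff.le_one
  · rw [indicator_of_notMem hw, ballCutoff.eq_zero (not_lt.1 hw)]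

lemma hasCompactSupport_ballCutoff_dist [ProperSpace X] (q : X) (r : ℝ) (n : ℕ) :
    HasCompactSupport fun w => ballCutoff r n (dist w q) :=
  HasCompactSupport.intro (isCompact_closedBall q r) fun _ hw =>
    ballCutoff.eq_zero (not_le.1 hw).le

variable [ProperSpace X] [MeasurableSpace X] [OpensMeasurableSpace X] {μ : Measure X}
  [IsFiniteMeasureOnCompacts μ]

lemma integrable_ballCutoff_dist (q : X) (r : ℝ) (n : ℕ) :
    Integrable (fun w => ballCutoff r n (dist w q)) μ :=
  ((ballCutoff.lipschitzWith r n).continuous.comp (continuous_id.dist continuous_const))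
    |>.integrable_of_hasCompactSupport (hasCompactSupport_ballCutoff_dist q r n)

lemma tendsto_integral_ballCutoff_dist (q : X) (r : ℝ) :
    Tendsto (fun n : ℕ => ∫ w, ballCutoff r n (dist w q) ∂μ) atTop (𝓝 (μ.real (ball q r))) := by
  rw [← integral_indicator_one measurableSet_ball]
  refine tendsto_integral_of_dominated_convergence ((ball q r).indicator 1)
    (fun n => (integrable_ballCutoff_dist q r n).aestronglyMeasurable)
    ((integrableOn_const measure_ball_lt_top.ne).integrable_indicator measurableSet_ball)
    (fun n => ae_of_all _ fun w => ?_) (ae_of_all _ fun w => ?_)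
  · rw [Real.norm_of_nonneg ballCutoff.nonneg]
    exact ballCutoff_dist_le_indicator q r n w
  · by_cases hw : w ∈ ball q r
    · rw [indicator_of_mem hw]
      exact (tendsto_congr' (ballCutoff.eventually_eq_one hw)).2 tendsto_const_nhds
    · simp only [indicator_of_notMem hw, ballCutoff.eq_zero (not_lt.1 hw), tendsto_const_nhds]

end Cutoff

lemma dist_sub_left_eq_dist_sub {E : Type*} [SeminormedAddCommGroup E] (p y c : E) :
    dist (p - y) c = dist y (p - c) := by
  rw [dist_eq_norm, dist_eq_norm, ← norm_neg]
  congr 1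
  abel

lemma SmoothlyReflectionless.measureReal_ball_sub_sub_eq {d : ℕ} {μ : Measure (Pt d)}
    [IsLocallyFiniteMeasure μ] (hμ : SmoothlyReflectionless μ) {u v : Pt d}
    (hu : u ∈ msupp μ) (hv : v ∈ msupp μ) (c : Pt d) (r : ℝ) :
    μ.real (ball (u - c) r) - μ.real (ball (u + c) r) =
      μ.real (ball (v - c) r) - μ.real (ball (v + c) r) := by
  set φ : ℕ → Pt d → ℝ := fun n w => ballCutoff r n (dist w c) - ballCutoff r n (dist w (-c))
  have hodd : ∀ n w, φ n (-w) = -φ n w := fun n w => by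
    simp only [φ, ← dist_neg_neg (-w), neg_neg, neg_sub]
  have hsupp : ∀ n, HasCompactSupport (φ n) := fun n =>
    (hasCompactSupport_ballCutoff_dist c r n).sub (hasCompactSupport_ballCutoff_dist (-c) r n)
  have hlip : ∀ n, ∃ K, LipschitzWith K (φ n) := fun n =>
    ⟨_, ((ballCutoff.lipschitzWith r n).comp (LipschitzWith.dist_left c)).sub
      ((ballCutoff.lipschitzWith r n).comp (LipschitzWith.dist_left (-c)))⟩
  choose Λ hΛ using fun n => hμ (φ n) (hodd n) (hsupp n) (hlip n)
  have hlim : ∀ p, Tendsto (fun n => ∫ y, φ n (p - y) ∂μ) atTop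
      (𝓝 (μ.real (ball (p - c) r) - μ.real (ball (p + c) r))) := by
    intro p
    have hφ : ∀ n, ∫ y, φ n (p - y) ∂μ = ∫ y, ballCutoff r n (dist y (p - c)) ∂μ -
        ∫ y, ballCutoff r n (dist y (p + c)) ∂μ := fun n => by
      rw [← integral_sub (integrable_ballCutoff_dist _ r n) (integrable_ballCutoff_dist _ r n)]
      simp only [φ, dist_sub_left_eq_dist_sub, sub_neg_eq_add]
    simpa only [hφ] using (tendsto_integral_ballCutoff_dist (p - c) r).sub
      (tendsto_integral_ballCutoff_dist (p + c) r)
  refine tendsto_nhds_unique ((hlim u).congr fun n => ?_) (hlim v)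
  rw [hΛ n u hu, hΛ n v hv]

lemma eq_zero_of_forall_nonneg_add_int_mul {c δ : ℝ} (h : ∀ n : ℤ, 0 ≤ c + n * δ) : δ = 0 := by
  rcases lt_trichotomy δ 0 with hδ | hδ | hδ
  · obtain ⟨n, hn⟩ := exists_nat_gt (c / -δ)
    rw [div_lt_iff₀ (neg_pos.2 hδ)] at hn
    have hn' := h n
    push_cast at hn'
    linarith
  · exact hδ
  · obtain ⟨n, hn⟩ := exists_nat_gt (c / δ)
    rw [div_lt_iff₀ hδ] at hn
    have hn' := h (-n)
    push_cast at hn'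
    linarith

lemma periodic_two_of_nonneg_of_add_two_eq {a : ℤ → ℝ} {δ : ℝ} (ha : ∀ i, 0 ≤ a i)
    (h : ∀ i, a (i + 2) = a i + δ) : Function.Periodic a 2 := by
  have hb : Function.Periodic (fun i : ℤ => a i - i * δ / 2) 2 := fun i => by
    simp only [h]; push_cast; ring
  have hδ : δ = 0 := eq_zero_of_forall_nonneg_add_int_mul (c := a 0) fun n => by
    have := hb.int_mul n 0
    simp only [zero_add, Int.cast_id] at this
    push_cast at this
    linarith [ha (n * 2)]
  simpa [hδ] using h

def IsBalancedAt (a : ℤ → ℝ) (j : ℤ) : Prop :=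
  ∀ k, a (j - k) + a (j + 1 + k) = a j + a (j + 1)

lemma isBalancedAt_of_sub_eq_sub {a : ℤ → ℝ} {j : ℤ}
    (h : ∀ k, a (j - k) - a (j + k) = a (j + 1 - k) - a (j + 1 + k)) : IsBalancedAt a j := by
  have hS : Function.Periodic (fun k => a (j - k) + a (j + 1 + k)) 1 := fun k => by
    have hk := h (k + 1)
    rw [show j + (k + 1) = j + 1 + k by ring, show j + 1 - (k + 1) = j - k by ring] at hk
    simp only
    linarith
  intro k
  simpa using hS.int_mul k 0

lemma IsBalancedAt.periodic {a : ℤ → ℝ} {j : ℤ} (ha : ∀ i, 0 ≤ a i) (h₀ : IsBalancedAt a j)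
    (h₁ : IsBalancedAt a (j + 1)) : Function.Periodic a 2 := by
  refine periodic_two_of_nonneg_of_add_two_eq ha (δ := a (j + 2) - a j) fun i => ?_
  have e₀ := h₀ (j - i)
  have e₁ := h₁ (i - j)
  rw [sub_sub_cancel, show j + 1 + (j - i) = j + 1 - (i - j) by ring] at e₀
  rw [show j + 1 + 1 + (i - j) = i + 2 by ring, show j + 1 + 1 = j + 2 by ring] at e₁
  linarith

section Line

variable {d : ℕ} {μ : Measure (Pt d)}

lemma mem_msupp_of_forall_le {p : Pt d} {r₀ : ℝ} (hr₀ : 0 < r₀)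
    (h : ∀ r, 0 < r → r ≤ r₀ → 0 < μ (ball p r)) : p ∈ msupp μ := fun _ hr =>
  (h _ (lt_min hr hr₀) (min_le_right _ _)).trans_le
    (measure_mono (ball_subset_ball (min_le_left _ _)))

variable [IsLocallyFiniteMeasure μ]

lemma mem_msupp_iff_measureReal_pos {p : Pt d} :
    p ∈ msupp μ ↔ ∀ r, 0 < r → 0 < μ.real (ball p r) := by
  simp only [msupp, mem_ofPred_eq, measureReal_def, ENNReal.toReal_pos_iff, measure_ball_lt_top,
    and_true]

lemma SmoothlyReflectionless.isBalancedAt (hμ : SmoothlyReflectionless μ) {x z : Pt d} {j : ℤ}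
    (hj : x + j • z ∈ msupp μ) (hj₁ : x + (j + 1) • z ∈ msupp μ) (r : ℝ) :
    IsBalancedAt (fun n : ℤ => μ.real (ball (x + n • z) r)) j := by
  refine isBalancedAt_of_sub_eq_sub fun k => ?_
  have e : ∀ i : ℤ, x + i • z - k • z = x + (i - k) • z ∧ x + i • z + k • z = x + (i + k) • z :=
    fun i => ⟨by module, by module⟩
  simpa only [(e _).1, (e _).2] using hμ.measureReal_ball_sub_sub_eq hj hj₁ (k • z) r

lemma SmoothlyReflectionless.sub_mem_msupp (hμ : SmoothlyReflectionless μ) {x z : Pt d}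
    (h₀ : x ∈ msupp μ) (h₁ : x + z ∈ msupp μ) : x - z ∈ msupp μ := by
  set a : ℝ → ℤ → ℝ := fun r n => μ.real (ball (x + n • z) r) with ha
  have hpos (n : ℤ) (hn : x + n • z ∈ msupp μ) {r : ℝ} (hr : 0 < r) : 0 < a r n :=
    mem_msupp_iff_measureReal_pos.1 hn r hr
  have hbal₀ (r : ℝ) : IsBalancedAt (a r) 0 := hμ.isBalancedAt (by simpa) (by simpa) r
  by_contra hz
  obtain ⟨r₀, hr₀, hnull⟩ : ∃ r₀, 0 < r₀ ∧ μ (ball (x + (-1 : ℤ) • z) r₀) = 0 := by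
    rw [show x + (-1 : ℤ) • z = x - z by module]
    simpa [msupp] using hz
  have hm₁ {r : ℝ} (hr : r ≤ r₀) : a r (-1) = 0 := by
    simp only [ha, measureReal_def, measure_mono_null (ball_subset_ball hr) hnull,
      ENNReal.toReal_zero]
  have h₂ : x + (1 + 1 : ℤ) • z ∈ msupp μ := by
    refine mem_msupp_of_forall_le hr₀ fun r hr hrr₀ => ?_
    have hbal := hbal₀ r 1
    simp only [zero_sub, zero_add] at hbal
    have : 0 < a r (1 + 1) := by
      linarith [hm₁ hrr₀, hpos 0 (by simpa) hr, show 0 ≤ a r 1 from measureReal_nonneg]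
    exact (ENNReal.toReal_pos_iff.1 this).1
  have hper := (hbal₀ r₀).periodic (fun _ => measureReal_nonneg)
    (hμ.isBalancedAt (by simpa using h₁) h₂ r₀)
  have h₁pos := hpos 1 (by simpa using h₁) hr₀
  have h₁null : a r₀ (-1 + 2) = a r₀ (-1) := hper (-1)
  rw [show (-1 + 2 : ℤ) = 1 by norm_num, hm₁ le_rfl] at h₁null
  exact h₁pos.ne' h₁null

lemma SmoothlyReflectionless.add_zsmul_mem_msupp (hμ : SmoothlyReflectionless μ) {x z : Pt d}
    (h₀ : x ∈ msupp μ) (h₁ : x + z ∈ msupp μ) (k : ℤ) : x + k • z ∈ msupp μ := by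
  suffices ∀ k : ℤ, x + k • z ∈ msupp μ ∧ x + (k + 1) • z ∈ msupp μ from (this k).1
  intro k
  induction k using Int.induction_on with
  | zero => simpa using ⟨h₀, h₁⟩
  | succ k ih =>
    refine ⟨ih.2, ?_⟩
    convert hμ.sub_mem_msupp ih.2 (z := -z) (by convert ih.1 using 1; module) using 1
    module
  | pred k ih =>
    refine ⟨?_, by simpa using ih.1⟩
    convert hμ.sub_mem_msupp ih.1 (z := z) (by convert ih.2 using 1; module) using 1
    module

end Line

/-- Two-point lemma: if `x, y ∈ supp μ` and `z = y − x`, then `x + kz ∈ supp μ` for all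
`k ∈ ℤ`, and `μ(B(x+2kz, r)) = μ(B(x,r))` for all `k ∈ ℤ`, `r > 0`. -/
theorem two_point_lemma (d : ℕ) (μ : Measure (Pt d)) (hloc : IsLocallyFiniteMeasure μ)
    (hrefl : SmoothlyReflectionless μ) (x y : Pt d) (hx : x ∈ msupp μ) (hy : y ∈ msupp μ)
    (z : Pt d) (hz : z = y - x) :
    (∀ k : ℤ, x + k • z ∈ msupp μ) ∧
    (∀ k : ℤ, ∀ r : ℝ, 0 < r → μ (ball (x + (2 * k) • z) r) = μ (ball x r)) := by
  have hline : ∀ k : ℤ, x + k • z ∈ msupp μ :=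
    hrefl.add_zsmul_mem_msupp hx (by rwa [hz, add_sub_cancel])
  refine ⟨hline, fun k r _ => ?_⟩
  have hper : Function.Periodic (fun n : ℤ => μ.real (ball (x + n • z) r)) 2 :=
    (hrefl.isBalancedAt (j := -1) (hline _) (hline _) r).periodic (fun _ => measureReal_nonneg)
      (hrefl.isBalancedAt (hline _) (hline _) r)
  have h2k := hper.int_mul k 0
  simp only [zero_add, zero_smul, add_zero, Int.cast_id, mul_comm k] at h2k
  exact (measureReal_eq_measureReal_iff measure_ball_lt_top.ne measure_ball_lt_top.ne).1 h2k
end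
end

section
/- Let μ be a smoothly reflectionless measure on ℝ^d, V a linear subspace with V + x₀ ⊂ supp(μ) for some x₀ ∈ supp(μ). If dist(x₀ + V, supp(μ) ∖ (x₀ + V)) = 0, then there exists a unit vector e perpendicular to V such that x₀ + span(V, e) ⊂ supp(μ). -/
/-!
Testing reflectionlessness against the odd function `x ↦ tent ε (x - s) - tent ε (x + s)` shows
that `tentMass μ ε (a - s) - tentMass μ ε (a + s)` does not depend on `a ∈ supp μ`. If `2a - b`
missed the support for some `a, b` in it, a handful of these identities along the line through `a`
and `b` would force a negative tent mass; so the support is closed under point reflections.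

A point of the support just off `x₀ + V` reflects the plane onto a parallel plane `x₀ + V + w`
with `w ⊥ V` short, and iterated reflections give `x₀ + V + ℤw ⊆ supp μ`. Along a subsequence the
directions `w / ‖w‖` converge to a unit vector `e ⊥ V`, and as the support is closed the
ever finer lattices `x₀ + v + ℤw` fill out the lines `x₀ + v + ℝe`.
-/
open MeasureTheory Metric Set Filter
noncomputable section

open Topology

section Tent

variable {E : Type*} [SeminormedAddCommGroup E]

def tent (ε : ℝ) (x : E) : ℝ := max (ε - ‖x‖) 0

lemma tent_nonneg (ε : ℝ) (x : E) : 0 ≤ tent ε x := le_max_right _ _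

lemma tent_neg (ε : ℝ) (x : E) : tent ε (-x) = tent ε x := by
  simp only [tent, norm_neg]

lemma tent_eq_zero {ε : ℝ} {x : E} (h : ε ≤ ‖x‖) : tent ε x = 0 :=
  max_eq_right (by linarith)

lemma lipschitzWith_tent (ε : ℝ) : LipschitzWith 1 (tent ε : E → ℝ) := by
  have h := ((LipschitzWith.const (α := E) ε).sub lipschitzWith_one_norm).max_const 0
  rwa [zero_add] at h

lemma continuous_tent (ε : ℝ) : Continuous (tent ε : E → ℝ) :=
  (lipschitzWith_tent ε).continuous

lemma hasCompactSupport_tent {E : Type*} [NormedAddCommGroup E] [ProperSpace E] (ε : ℝ) :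
    HasCompactSupport (tent ε : E → ℝ) :=
  .intro (isCompact_closedBall 0 ε) fun x hx =>
    tent_eq_zero (by simp only [mem_closedBall, dist_zero_right, not_le] at hx; exact hx.le)

lemma support_tent_sub (ε : ℝ) (z : E) : Function.support (fun y => tent ε (z - y)) = ball z ε := by
  ext y
  simp [tent, dist_eq_norm']

end Tent

lemma msupp_eq_support {d : ℕ} (μ : Measure (Pt d)) : msupp μ = μ.support := by
  ext x
  exact nhds_basis_ball.mem_measureSupport.symm

lemma isClosed_msupp {d : ℕ} (μ : Measure (Pt d)) : IsClosed (msupp μ) :=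
  msupp_eq_support μ ▸ Measure.isClosed_support

section TentMass

variable {d : ℕ} (μ : Measure (Pt d))

def tentMass (ε : ℝ) (z : Pt d) : ℝ := ∫ y, tent ε (z - y) ∂μ

variable {μ}

lemma tentMass_nonneg (ε : ℝ) (z : Pt d) : 0 ≤ tentMass μ ε z :=
  integral_nonneg fun _ => tent_nonneg _ _

variable [IsLocallyFiniteMeasure μ]

lemma integrable_tent_sub (ε : ℝ) (z : Pt d) : Integrable (fun y => tent ε (z - y)) μ :=
  ((continuous_tent ε).comp (Homeomorph.subLeft z).continuous).integrable_of_hasCompactSupport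
    ((hasCompactSupport_tent ε).comp_isClosedEmbedding (Homeomorph.subLeft z).isClosedEmbedding)

lemma tentMass_pos_iff {ε : ℝ} {z : Pt d} : 0 < tentMass μ ε z ↔ 0 < μ (ball z ε) := by
  rw [tentMass, integral_pos_iff_support_of_nonneg (fun _ => tent_nonneg _ _)
    (integrable_tent_sub ε z), support_tent_sub]

lemma tentMass_eq_zero_iff {ε : ℝ} {z : Pt d} : tentMass μ ε z = 0 ↔ μ (ball z ε) = 0 := by
  rw [← not_iff_not, ← ne_eq, ← ne_eq, ← (tentMass_nonneg ε z).lt_iff_ne', ← pos_iff_ne_zero,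
    tentMass_pos_iff]

lemma mem_msupp_of_tentMass_pos {r : ℝ} (hr : 0 < r) {z : Pt d}
    (h : ∀ ε, 0 < ε → ε ≤ r → 0 < tentMass μ ε z) : z ∈ msupp μ := fun _ hρ =>
  (tentMass_pos_iff.1 (h _ (lt_min hρ hr) (min_le_right _ _))).trans_le
    (measure_mono (ball_subset_ball (min_le_left _ _)))

lemma SmoothlyReflectionless.tentMass_sub_eq (hrefl : SmoothlyReflectionless μ) (ε : ℝ)
    (s : Pt d) {a b : Pt d} (ha : a ∈ msupp μ) (hb : b ∈ msupp μ) :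
    tentMass μ ε (a - s) - tentMass μ ε (a + s) = tentMass μ ε (b - s) - tentMass μ ε (b + s) := by
  set φ : Pt d → ℝ := fun x => tent ε (x - s) - tent ε (x + s) with hφ
  have hodd : ∀ x, φ (-x) = -φ x := fun x => by
    change tent ε (-x - s) - tent ε (-x + s) = -(tent ε (x - s) - tent ε (x + s))
    rw [show -x - s = -(x + s) by abel, show -x + s = -(x - s) by abel, tent_neg, tent_neg,
      neg_sub]
  have hcs : HasCompactSupport φ :=
    ((hasCompactSupport_tent ε).comp_isClosedEmbedding
      (Homeomorph.subRight s).isClosedEmbedding).sub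
    ((hasCompactSupport_tent ε).comp_isClosedEmbedding (Homeomorph.addRight s).isClosedEmbedding)
  have hlip : ∃ K, LipschitzWith K φ :=
    ⟨_, ((lipschitzWith_tent ε).comp (LipschitzWith.id.sub (.const s))).sub
      ((lipschitzWith_tent ε).comp (LipschitzWith.id.add (.const s)))⟩
  have hconv : ∀ x, ∫ y, φ (x - y) ∂μ = tentMass μ ε (x - s) - tentMass μ ε (x + s) := fun x => by
    rw [tentMass, tentMass, ← integral_sub (integrable_tent_sub ε _) (integrable_tent_sub ε _)]
    simp only [hφ, sub_right_comm, sub_add_eq_add_sub]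
  obtain ⟨Λ, hΛ⟩ := hrefl φ hodd hcs hlip
  rw [← hconv, ← hconv, hΛ a ha, hΛ b hb]

end TentMass

def ReflectionClosed {E : Type*} [AddCommGroup E] (S : Set E) : Prop :=
  ∀ a ∈ S, ∀ b ∈ S, a + (a - b) ∈ S

lemma ReflectionClosed.add_zsmul_mem {E : Type*} [AddCommGroup E] {S : Set E}
    (hS : ReflectionClosed S) {a w : E} (h0 : a ∈ S) (h1 : a + w ∈ S) (k : ℤ) :
    a + k • w ∈ S := by
  have hnat : ∀ n : ℕ, a + n • w ∈ S ∧ a + (n + 1) • w ∈ S := by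
    intro n
    induction n with
    | zero => simpa using ⟨h0, h1⟩
    | succ n ih =>
      refine ⟨ih.2, ?_⟩
      convert hS _ ih.2 _ ih.1 using 1
      simp only [add_smul, one_smul]
      abel
  obtain ⟨n, rfl | rfl⟩ := k.eq_nat_or_neg
  · simpa using (hnat n).1
  · convert hS a h0 _ (hnat n).1 using 1
    simp only [neg_smul, natCast_zsmul]
    abel

section Reflection

variable {d : ℕ} {μ : Measure (Pt d)}

-- Indexing by `ℤ` lets `norm_num` normalise the indices in instances of `lineMass_sub_eq`.
def lineMass (μ : Measure (Pt d)) (ε : ℝ) (a u : Pt d) (k : ℤ) : ℝ :=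
  tentMass μ ε (a + (k : ℝ) • u)

lemma SmoothlyReflectionless.lineMass_sub_eq [IsLocallyFiniteMeasure μ]
    (hrefl : SmoothlyReflectionless μ) (ε : ℝ) {a u : Pt d} {i j : ℤ}
    (hi : a + (i : ℝ) • u ∈ msupp μ) (hj : a + (j : ℝ) • u ∈ msupp μ) (m : ℤ) :
    lineMass μ ε a u (i - m) - lineMass μ ε a u (i + m) =
      lineMass μ ε a u (j - m) - lineMass μ ε a u (j + m) := by
  simp only [lineMass, Int.cast_sub, Int.cast_add, sub_smul, add_smul, ← add_sub_assoc,
    ← add_assoc]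
  exact hrefl.tentMass_sub_eq ε _ hi hj

theorem SmoothlyReflectionless.reflectionClosed_msupp [IsLocallyFiniteMeasure μ]
    (hrefl : SmoothlyReflectionless μ) : ReflectionClosed (msupp μ) := by
  intro a ha b hb
  by_contra hc
  obtain ⟨r, hr, hnull⟩ : ∃ r, 0 < r ∧ μ (ball (a + (a - b)) r) = 0 := by
    simpa [msupp] using hc
  set u := b - a
  have mem0 : a + ((0 : ℤ) : ℝ) • u ∈ msupp μ := by simpa using ha
  have mem1 : a + ((1 : ℤ) : ℝ) • u ∈ msupp μ := by simpa [u] using hb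
  have hpos : ∀ {ε : ℝ} {k : ℤ}, 0 < ε → a + (k : ℝ) • u ∈ msupp μ → 0 < lineMass μ ε a u k :=
    fun hε hk => tentMass_pos_iff.2 (hk _ hε)
  have hgap : ∀ ε ≤ r, lineMass μ ε a u (-1) = 0 := fun ε hε =>
    tentMass_eq_zero_iff.2 <| measure_mono_null (ball_subset_ball hε) <| by
      simpa [u] using hnull
  have mem2 : a + ((2 : ℤ) : ℝ) • u ∈ msupp μ := by
    refine mem_msupp_of_tentMass_pos hr fun ε hε hεr => ?_
    have h := hrefl.lineMass_sub_eq ε mem0 mem1 1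
    norm_num at h
    have := hpos hε mem0
    have := hpos hε mem1
    have := hgap ε hεr
    change 0 < lineMass μ ε a u 2
    linarith
  -- With `f k = lineMass μ r a u k` and `f (-1) = 0`, these force `f (-3) = - f 1 < 0`.
  have e1 := hrefl.lineMass_sub_eq r mem0 mem1 1
  have e2 := hrefl.lineMass_sub_eq r mem0 mem2 1
  have e3 := hrefl.lineMass_sub_eq r mem1 mem2 2
  have e4 := hrefl.lineMass_sub_eq r mem0 mem2 2
  have e5 := hrefl.lineMass_sub_eq r mem0 mem1 3
  norm_num at e1 e2 e3 e4 e5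
  have := hpos hr mem1
  have := hgap r le_rfl
  have := tentMass_nonneg (μ := μ) r (a + ((-3 : ℤ) : ℝ) • u)
  change 0 ≤ lineMass μ r a u (-3) at this
  linarith

end Reflection

lemma norm_round_div_norm_smul_sub_le {E : Type*} [SeminormedAddCommGroup E] [NormedSpace ℝ E]
    (t : ℝ) (w : E) : ‖(round (t / ‖w‖) : ℝ) • w - t • ‖w‖⁻¹ • w‖ ≤ ‖w‖ / 2 := by
  rw [smul_smul, ← div_eq_mul_inv, ← sub_smul, norm_smul, Real.norm_eq_abs, abs_sub_comm]
  nlinarith [abs_sub_round (t / ‖w‖), norm_nonneg w]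

theorem IsClosed.add_smul_mem_of_zsmul_mem {E : Type*} [NormedAddCommGroup E] [NormedSpace ℝ E]
    {S : Set E} (hS : IsClosed S) {ι : Type*} {l : Filter ι} [l.NeBot] {w : ι → E} {x e : E}
    (hw : Tendsto (fun i => ‖w i‖) l (𝓝 0)) (he : Tendsto (fun i => ‖w i‖⁻¹ • w i) l (𝓝 e))
    (hmem : ∀ i, ∀ k : ℤ, x + k • w i ∈ S) (t : ℝ) : x + t • e ∈ S := by
  have hround : Tendsto (fun i => (round (t / ‖w i‖) : ℝ) • w i - t • ‖w i‖⁻¹ • w i) l (𝓝 0) :=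
    squeeze_zero_norm (fun i => norm_round_div_norm_smul_sub_le t (w i)) (by
      simpa using hw.div_const 2)
  have hlim : Tendsto (fun i => x + (round (t / ‖w i‖) : ℝ) • w i) l (𝓝 (x + t • e)) := by
    convert tendsto_const_nhds.add ((he.const_smul t).add hround) using 2
    · abel
    · simp
  exact hS.mem_of_tendsto hlim (.of_forall fun i => by
    simpa only [Int.cast_smul_eq_zsmul] using hmem i _)

section Orthogonal

variable {E : Type*} [NormedAddCommGroup E] [InnerProductSpace ℝ E] {S : Set E}
  {V : Submodule ℝ E} {x₀ : E}

lemma ReflectionClosed.exists_orthogonal_translate (hS : ReflectionClosed S)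
    [V.HasOrthogonalProjection] (hV : ∀ v ∈ V, x₀ + v ∈ S) {p : E} (hp : p ∈ S)
    (hpV : p - x₀ ∉ V) {v₀ : E} (hv₀ : v₀ ∈ V) :
    ∃ w ∈ Vᗮ, w ≠ 0 ∧ ‖w‖ ≤ 2 * ‖p - (x₀ + v₀)‖ ∧ ∀ v ∈ V, x₀ + v + w ∈ S := by
  set y := p - x₀
  set vp := V.starProjection y
  have hvp : vp ∈ V := V.starProjection_apply_mem y
  have hdist : ‖y - vp‖ ≤ ‖p - (x₀ + v₀)‖ := by
    rw [Submodule.starProjection_minimal, ← sub_sub]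
    exact ciInf_le ⟨0, by rintro _ ⟨v, rfl⟩; positivity⟩ (⟨v₀, hv₀⟩ : V)
  refine ⟨(2 : ℝ) • (y - vp), Vᗮ.smul_mem _ (V.sub_starProjection_mem_orthogonal y),
    smul_ne_zero two_ne_zero (sub_ne_zero.2 fun h => hpV (h ▸ hvp)), ?_, fun v hv => ?_⟩
  · rw [norm_smul, Real.norm_two]
    linarith
  · convert hS p hp _ (hV _ (V.sub_mem (V.smul_mem 2 hvp) hv)) using 1
    simp only [y]
    module

variable [FiniteDimensional ℝ E]

theorem ReflectionClosed.exists_line_of_orthogonal_translates (hS : ReflectionClosed S)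
    (hSc : IsClosed S) (hV : ∀ v ∈ V, x₀ + v ∈ S)
    (htr : ∀ δ > 0, ∃ w ∈ Vᗮ, w ≠ 0 ∧ ‖w‖ < δ ∧ ∀ v ∈ V, x₀ + v + w ∈ S) :
    ∃ e : E, ‖e‖ = 1 ∧ e ∈ Vᗮ ∧ ∀ v ∈ V, ∀ t : ℝ, x₀ + v + t • e ∈ S := by
  choose w hwV hw0 hwδ hwS using fun n : ℕ => htr (1 / (n + 1)) (by positivity)
  have hsphere : ∀ n, ‖w n‖⁻¹ • w n ∈ sphere (0 : E) 1 := fun n => by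
    simp [norm_smul, hw0 n]
  obtain ⟨e, he, φ, hφ, hlim⟩ := (isCompact_sphere (0 : E) 1).tendsto_subseq hsphere
  have hw : Tendsto (fun n => ‖w n‖) atTop (𝓝 0) :=
    squeeze_zero (fun _ => norm_nonneg _) (fun n => (hwδ n).le)
      tendsto_one_div_add_atTop_nhds_zero_nat
  refine ⟨e, by simpa using he,
    V.isClosed_orthogonal.mem_of_tendsto hlim (.of_forall fun n => Vᗮ.smul_mem _ (hwV _)),
    fun v hv t => ?_⟩
  exact hSc.add_smul_mem_of_zsmul_mem (w := w ∘ φ) (hw.comp hφ.tendsto_atTop) hlim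
    (fun n k => hS.add_zsmul_mem (hV v hv) (hwS _ v hv) k) t

end Orthogonal

theorem accumulation_gives_bigger_plane_general (d : ℕ) (μ : Measure (Pt d))
    (hloc : IsLocallyFiniteMeasure μ) (hrefl : SmoothlyReflectionless μ)
    (V : Submodule ℝ (Pt d)) (x₀ : Pt d)
    (hV : ∀ v ∈ V, v + x₀ ∈ msupp μ)
    (hacc : ∀ δ : ℝ, 0 < δ → ∃ p ∈ msupp μ,
      p ∉ {y | ∃ v ∈ V, y = x₀ + v} ∧ ∃ q ∈ {y | ∃ v ∈ V, y = x₀ + v}, dist p q < δ) :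
    ∃ e : Pt d, ‖e‖ = 1 ∧ (∀ v ∈ V, inner ℝ e v = (0:ℝ)) ∧
      ∀ v ∈ V, ∀ t : ℝ, x₀ + v + t • e ∈ msupp μ := by
  have hplane : ∀ v ∈ V, x₀ + v ∈ msupp μ := fun v hv => add_comm v x₀ ▸ hV v hv
  have hS := hrefl.reflectionClosed_msupp
  obtain ⟨e, he, heV, hline⟩ := hS.exists_line_of_orthogonal_translates (isClosed_msupp μ) hplane
    fun δ hδ => by
      obtain ⟨p, hp, hpV, _, ⟨v₀, hv₀, rfl⟩, hpq⟩ := hacc (δ / 2) (by positivity)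
      obtain ⟨w, hwV, hw0, hwp, hwS⟩ :=
        hS.exists_orthogonal_translate hplane hp (fun h => hpV ⟨p - x₀, h, by abel⟩) hv₀
      rw [dist_eq_norm] at hpq
      exact ⟨w, hwV, hw0, by linarith, hwS⟩
  exact ⟨e, he, fun v hv => Submodule.inner_left_of_mem_orthogonal hv heV, hline⟩

/-- If `V + x₀ ⊆ supp μ` and `supp μ ∖ (x₀ + V)` accumulates on `x₀ + V`, then
`x₀ + span(V, e) ⊆ supp μ` for some unit vector `e ⊥ V`. -/
theorem accumulation_gives_bigger_plane (d : ℕ) (μ : Measure (Pt d))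
    (hloc : IsLocallyFiniteMeasure μ) (hrefl : SmoothlyReflectionless μ)
    (V : Submodule ℝ (Pt d)) (x₀ : Pt d) (hx₀ : x₀ ∈ msupp μ)
    (hV : ∀ v ∈ V, v + x₀ ∈ msupp μ)
    (hacc : ∀ δ : ℝ, 0 < δ → ∃ p ∈ msupp μ,
      p ∉ {y | ∃ v ∈ V, y = x₀ + v} ∧ ∃ q ∈ {y | ∃ v ∈ V, y = x₀ + v}, dist p q < δ) :
    ∃ e : Pt d, ‖e‖ = 1 ∧ (∀ v ∈ V, inner ℝ e v = (0:ℝ)) ∧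
      ∀ v ∈ V, ∀ t : ℝ, x₀ + v + t • e ∈ msupp μ :=
  accumulation_gives_bigger_plane_general d μ hloc hrefl V x₀ hV hacc
end
end

section
/- Conversely, every measure of the form μ = Σ_{x ∈ E} f(x) · ℋ^k|(V + x), where V is a k-dimensional linear subspace of ℝ^d, E ⊂ V^⊥ is a uniformly discrete set symmetric about each of its points, and f is a nonnegative symmetric function on E, is smoothly reflectionless. -/
open MeasureTheory Metric Set Filter
noncomputable section

theorem integral_comp_sub_eq_zero_of_map_pointReflection {F : Type*} [NormedAddCommGroup F]
    [MeasurableSpace F] [BorelSpace F] {μ : Measure F} {x : F}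
    (hμ : μ.map (Equiv.pointReflection x) = μ) {φ : F → ℝ} (hφ : ∀ y, φ (-y) = -φ y) :
    ∫ y, φ (x - y) ∂μ = 0 := by
  have hneg : ∫ y, φ (x - y) ∂μ = -∫ y, φ (x - y) ∂μ := calc
    ∫ y, φ (x - y) ∂μ = ∫ y, φ (x - y) ∂μ.map (Homeomorph.pointReflection x).toMeasurableEquiv := by
      rw [Homeomorph.toMeasurableEquiv_coe, Homeomorph.coe_pointReflection, hμ]
    _ = ∫ y, φ (x - Equiv.pointReflection x y) ∂μ := integral_map_equiv _ _
    _ = ∫ y, -φ (x - y) ∂μ := by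
      congr 1 with y
      rw [← hφ, Equiv.pointReflection_apply, vsub_eq_sub, vadd_eq_add]
      congr 1
      abel
    _ = -∫ y, φ (x - y) ∂μ := integral_neg _
  linarith

section Sheets

variable {F : Type*} [NormedAddCommGroup F] [NormedSpace ℝ F]

def sheet (V : Submodule ℝ F) (p : F) : Set F := {z | ∃ v ∈ V, z = p + v}

theorem mem_sheet {V : Submodule ℝ F} {p z : F} : z ∈ sheet V p ↔ z - p ∈ V :=
  ⟨fun ⟨v, hv, hz⟩ => by rwa [hz, add_sub_cancel_left], fun h => ⟨z - p, h, by abel⟩⟩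

theorem Equiv.pointReflection_eq_two_smul_sub (x y : F) :
    Equiv.pointReflection x y = (2 : ℝ) • x - y := by
  rw [Equiv.pointReflection_apply, vsub_eq_sub, vadd_eq_add, two_smul]
  abel

theorem pointReflection_preimage_sheet {V : Submodule ℝ F} {x e : F} (hxe : x ∈ sheet V e)
    (p : F) : Equiv.pointReflection x ⁻¹' sheet V ((2 : ℝ) • e - p) = sheet V p := by
  ext z
  rw [Set.mem_preimage, mem_sheet, mem_sheet, Equiv.pointReflection_eq_two_smul_sub]
  have h2 : (2 : ℝ) • x - z - ((2 : ℝ) • e - p) = (2 : ℝ) • (x - e) - (z - p) := by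
    rw [smul_sub]
    abel
  rw [h2, V.sub_mem_iff_right (V.smul_mem _ (mem_sheet.1 hxe))]

theorem map_pointReflection_eq_self_of_sheet_sum [MeasurableSpace F] [BorelSpace F]
    {μ : Measure F} {V : Submodule ℝ F} {E : Set F} {f : F → ℝ} {s : ℝ}
    (hsym : ∀ x ∈ E, ∀ y ∈ E, (2 : ℝ) • y - x ∈ E)
    (hfsym : ∀ x ∈ E, ∀ y ∈ E, f ((2 : ℝ) • y - x) = f x)
    (hrep : ∀ A : Set F, MeasurableSet A →
      μ A = ∑' p : E, ENNReal.ofReal (f p) * μH[s] (A ∩ sheet V p))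
    {x e : F} (he : e ∈ E) (hxe : x ∈ sheet V e) :
    μ.map (Equiv.pointReflection x) = μ := by
  let R := AffineIsometryEquiv.pointReflection ℝ x
  let σ : Equiv.Perm E := Function.Involutive.toPerm
    (fun p : E => ⟨(2 : ℝ) • e - p, hsym p p.2 e he⟩) fun p => Subtype.ext (sub_sub_cancel _ _)
  have hRm : Measurable (Equiv.pointReflection x) := R.continuous.measurable
  ext A hA
  rw [Measure.map_apply hRm hA, hrep _ (hRm hA), hrep A hA,
    ← σ.tsum_eq fun p => ENNReal.ofReal (f p) * μH[s] (A ∩ sheet V p)]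
  refine tsum_congr fun p => ?_
  change _ = ENNReal.ofReal (f ((2 : ℝ) • e - p)) * μH[s] (A ∩ sheet V ((2 : ℝ) • e - p))
  rw [hfsym p p.2 e he, ← pointReflection_preimage_sheet hxe p, ← Set.preimage_inter]
  exact congrArg _ (R.toIsometryEquiv.hausdorffMeasure_preimage s _)

end Sheets

theorem norm_starProjection_orthogonal_sub_le {F : Type*} [NormedAddCommGroup F]
    [InnerProductSpace ℝ F] {V : Submodule ℝ F} [V.HasOrthogonalProjection]
    {p z : F} (hp : p ∈ Vᗮ) (hz : z ∈ sheet V p) (x : F) :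
    ‖Vᗮ.starProjection x - p‖ ≤ ‖x - z‖ := by
  have hpz : Vᗮ.starProjection z = p := by
    obtain ⟨v, hv, rfl⟩ := hz
    rw [map_add, Submodule.starProjection_eq_self_iff.2 hp,
      Submodule.starProjection_orthogonal_apply_eq_zero hv, add_zero]
  rw [← hpz, ← map_sub]
  exact Submodule.norm_starProjection_apply_le _ _

section Support

variable {d : ℕ} {μ : Measure (Pt d)} {V : Submodule ℝ (Pt d)} {E : Set (Pt d)} {f : Pt d → ℝ}
  {s : ℝ}

theorem starProjection_orthogonal_mem_closure_of_mem_msupp (hEperp : E ⊆ (Vᗮ : Set (Pt d)))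
    (hrep : ∀ A : Set (Pt d), MeasurableSet A →
      μ A = ∑' p : E, ENNReal.ofReal (f p) * μH[s] (A ∩ sheet V p))
    {x : Pt d} (hx : x ∈ msupp μ) : Vᗮ.starProjection x ∈ closure E := by
  refine Metric.mem_closure_iff.2 fun r hr => ?_
  have hpos := hx r hr
  rw [hrep _ measurableSet_ball, pos_iff_ne_zero, Ne, ENNReal.tsum_eq_zero, not_forall] at hpos
  obtain ⟨p, hp⟩ := hpos
  obtain ⟨z, hzx, hzp⟩ := nonempty_of_measure_ne_zero (right_ne_zero_of_mul hp)
  refine ⟨p, p.2, ?_⟩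
  calc dist (Vᗮ.starProjection x) p ≤ ‖x - z‖ :=
        (dist_eq_norm _ _).trans_le (norm_starProjection_orthogonal_sub_le (hEperp p.2) hzp x)
    _ < r := by rw [← dist_eq_norm, dist_comm]; exact hzx

theorem exists_mem_sheet_of_mem_msupp {δ : ℝ} (hδ : 0 < δ) (hEperp : E ⊆ (Vᗮ : Set (Pt d)))
    (hdisc : ∀ x ∈ E, ∀ y ∈ E, x ≠ y → δ ≤ dist x y)
    (hrep : ∀ A : Set (Pt d), MeasurableSet A →
      μ A = ∑' p : E, ENNReal.ofReal (f p) * μH[s] (A ∩ sheet V p))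
    {x : Pt d} (hx : x ∈ msupp μ) : ∃ e ∈ E, x ∈ sheet V e := by
  refine ⟨_, (isClosed_of_pairwise_le_dist hδ hdisc).closure_subset
    (starProjection_orthogonal_mem_closure_of_mem_msupp hEperp hrep hx), ?_⟩
  exact mem_sheet.2 (V.orthogonal_orthogonal.le (Vᗮ.sub_starProjection_mem_orthogonal x))

end Support

theorem structure_gives_reflectionless_general (d : ℕ) (μ : Measure (Pt d)) (k : ℕ)
    (V : Submodule ℝ (Pt d))
    (E : Set (Pt d)) (f : Pt d → ℝ) (δ : ℝ) (hδ : 0 < δ)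
    (hEperp : E ⊆ (Vᗮ : Set (Pt d)))
    (hdisc : ∀ x ∈ E, ∀ y ∈ E, x ≠ y → δ ≤ dist x y)
    (hsym : ∀ x ∈ E, ∀ y ∈ E, (2:ℝ) • y - x ∈ E)
    (hfsym : ∀ x ∈ E, ∀ y ∈ E, f ((2:ℝ) • y - x) = f x)
    (hrep : ∀ A : Set (Pt d), MeasurableSet A →
      μ A = ∑' x : E, ENNReal.ofReal (f x) *
        μH[(k : ℝ)] (A ∩ {z | ∃ v ∈ V, z = (x : Pt d) + v})) :
    SmoothlyReflectionless μ := by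
  intro φ hodd _ _
  refine ⟨0, fun x hx => ?_⟩
  obtain ⟨e, he, hxe⟩ := exists_mem_sheet_of_mem_msupp hδ hEperp hdisc hrep hx
  exact integral_comp_sub_eq_zero_of_map_pointReflection
    (map_pointReflection_eq_self_of_sheet_sum hsym hfsym hrep he hxe) hodd

/-- Conversely, every measure of the form `Σ_{x ∈ E} f(x) ℋ^k|(V + x)`, with `V` a
`k`-dimensional subspace, `E ⊆ V^⊥` uniformly discrete and symmetric about each of its
points, and `f ≥ 0` symmetric on `E`, is smoothly reflectionless. -/
theorem structure_gives_reflectionless (d : ℕ) (μ : Measure (Pt d)) (k : ℕ) (hk : k ≤ d)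
    (V : Submodule ℝ (Pt d)) (hV : Module.finrank ℝ V = k)
    (E : Set (Pt d)) (f : Pt d → ℝ) (δ : ℝ) (hδ : 0 < δ)
    (hEperp : E ⊆ (Vᗮ : Set (Pt d)))
    (hdisc : ∀ x ∈ E, ∀ y ∈ E, x ≠ y → δ ≤ dist x y)
    (hsym : ∀ x ∈ E, ∀ y ∈ E, (2:ℝ) • y - x ∈ E)
    (hf : ∀ x ∈ E, 0 ≤ f x)
    (hfsym : ∀ x ∈ E, ∀ y ∈ E, f ((2:ℝ) • y - x) = f x)
    (hrep : ∀ A : Set (Pt d), MeasurableSet A →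
      μ A = ∑' x : E, ENNReal.ofReal (f x) *
        μH[(k : ℝ)] (A ∩ {z | ∃ v ∈ V, z = (x : Pt d) + v})) :
    SmoothlyReflectionless μ :=
  structure_gives_reflectionless_general d μ k V E f δ hδ hEperp hdisc hsym hfsym hrep
end
end

section
/- Let μ be a smoothly reflectionless measure, x ∈ supp(μ), z ∈ ℝ^d with x + kz ∈ supp(μ) for all k ∈ ℕ. Fix r > 0, k ∈ ℕ, and let B = B(kz, r) with reflectionless constant Λ_B (so μ(w+B) − μ(w−B) = Λ_B for all w ∈ supp(μ)). Then Λ_B = 0. -/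
open MeasureTheory Metric Set Filter
noncomputable section

/-! Smooth the ball `B(0, r)` into an even Lipschitz bump `ψ ≥ 𝟙_{B(0,r)}`. Applying the
reflectionless property to the odd functions `ψ(· - a) - ψ(· + a)` shows that `g j = (ψ * μ)(x + jz)`
has increments `D n = g j - g (j + 2n)` independent of `j`, so `D n = n D 1`. Nonnegativity of
`ψ * μ` at `x + 2nz` and at `x - 2nz` bounds `n D 1` above and below, hence `D = 0` and `g` is
`2`-periodic. On the other hand `c j = μ(B(x + jz, r)) ≤ g j` grows by `Λ` every `2k` steps, so
`Λ = 0`. -/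

lemma eq_zero_of_forall_add_nat_mul_mem_Icc {a s B : ℝ} (h : ∀ m : ℕ, a + m * s ∈ Icc 0 B) :
    s = 0 := by
  have hbound (m : ℕ) : |(m : ℝ) * s| ≤ B := by
    have h0 := h 0
    have hm := h m
    simp only [CharP.cast_eq_zero, zero_mul, add_zero] at h0
    exact abs_le.2 ⟨by linarith [hm.1, h0.2], by linarith [hm.2, h0.1]⟩
  by_contra hs
  obtain ⟨m, hm⟩ := exists_nat_gt (B / |s|)
  have hm' := hbound m
  rw [abs_mul, Nat.abs_cast, ← le_div_iff₀ (abs_pos.2 hs)] at hm'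
  linarith

lemma apply_add_mul_eq_of_apply_add_eq {M : Type*} [AddMonoid M] {u : ℕ → M} {p : ℕ} {s : M}
    (h : ∀ j, u (j + p) = u j + s) (m j : ℕ) : u (j + m * p) = u j + m • s := by
  induction m with
  | zero => simp
  | succ m ih => rw [Nat.succ_mul, ← add_assoc, h, ih, succ_nsmul, add_assoc]

lemma eq_zero_of_sub_add_two_mul_eq {g D : ℕ → ℝ} (hg : ∀ j, 0 ≤ g j)
    (hD : ∀ n j, g j - g (j + 2 * n) = D n) (hDg : ∀ n, 0 ≤ g n + D n) (n : ℕ) : D n = 0 := by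
  have hprog := apply_add_mul_eq_of_apply_add_eq (u := g) (p := 2) (s := -D 1)
    fun j => by linarith [hD 1 j]
  have hDn (n : ℕ) : D n = n * D 1 := by
    have h1 := hD n 0
    have h2 := hprog n 0
    rw [mul_comm 2 n] at h1
    rw [nsmul_eq_mul] at h2
    linarith
  have hD1 : D 1 = 0 := by
    refine neg_eq_zero.1 (eq_zero_of_forall_add_nat_mul_mem_Icc (a := g 0) (B := 2 * g 0)
      fun m => ?_)
    have h1 := hprog m 0
    have h2 := hDg (m * 2)
    rw [nsmul_eq_mul, zero_add] at h1
    rw [hDn, h1] at h2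
    push_cast at h2
    exact ⟨h1 ▸ hg (m * 2), by linarith⟩
  rw [hDn, hD1, mul_zero]

lemma add_add_nsmul_sub_nsmul {G : Type*} [AddCommGroup G] (x z : G) (j n : ℕ) :
    x + (j + n) • z - n • z = x + j • z := by
  rw [add_nsmul]
  abel

lemma add_add_nsmul_add_nsmul {G : Type*} [AddCommGroup G] (x z : G) (j n : ℕ) :
    x + (j + n) • z + n • z = x + (j + 2 * n) • z := by
  rw [two_mul, ← add_assoc, add_nsmul _ (j + n)]
  abel

section Smoothing

variable {E : Type*} [NormedAddCommGroup E] [MeasurableSpace E] [OpensMeasurableSpace E]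
  {μ : Measure E} {φ : E → ℝ}

lemma HasCompactSupport.integrable_comp_sub_left [IsFiniteMeasureOnCompacts μ]
    (hφ : HasCompactSupport φ) (hφc : Continuous φ) (w : E) :
    Integrable (fun y => φ (w - y)) μ :=
  (hφc.comp (continuous_const.sub continuous_id)).integrable_of_hasCompactSupport
    (hφ.comp_homeomorph (Homeomorph.subLeft w))

lemma measureReal_ball_le_integral {r : ℝ} (h0 : ∀ v, 0 ≤ φ v)
    (h1 : ∀ v ∈ ball (0 : E) r, φ v = 1) {w : E} (hint : Integrable (fun y => φ (w - y)) μ) :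
    μ.real (ball w r) ≤ ∫ y, φ (w - y) ∂μ := by
  rw [← integral_indicator_one measurableSet_ball]
  refine integral_mono_of_nonneg (Eventually.of_forall fun y => indicator_nonneg (by simp) y) hint
    (Eventually.of_forall fun y => ?_)
  by_cases hy : y ∈ ball w r
  · rw [indicator_of_mem hy, Pi.one_apply]
    exact (h1 (w - y) (by simpa [dist_eq_norm, norm_sub_rev] using hy)).ge
  · rw [indicator_of_notMem hy]
    exact h0 _

end Smoothing

lemma SmoothlyReflectionless.exists_integral_sub_integral_eq {d : ℕ} {μ : Measure (Pt d)}
    [IsLocallyFiniteMeasure μ] (hrefl : SmoothlyReflectionless μ) {φ : Pt d → ℝ}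
    (heven : ∀ v, φ (-v) = φ v) (hφ : HasCompactSupport φ) {K : NNReal} (hK : LipschitzWith K φ)
    (a : Pt d) :
    ∃ C : ℝ, ∀ w ∈ msupp μ, (∫ y, φ (w - a - y) ∂μ) - ∫ y, φ (w + a - y) ∂μ = C := by
  have hodd (v : Pt d) : φ (-v - a) - φ (-v + a) = -(φ (v - a) - φ (v + a)) := by
    rw [← neg_add', heven, show -v + a = -(v - a) by abel, heven, neg_sub]
  obtain ⟨C, hC⟩ := hrefl (fun v => φ (v - a) - φ (v + a)) hodd
    ((hφ.comp_homeomorph (Homeomorph.subRight a)).sub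
      (hφ.comp_homeomorph (Homeomorph.addRight a)))
    ⟨_, (hK.comp (IsometryEquiv.subRight a).isometry.lipschitz).sub
      (hK.comp (IsometryEquiv.addRight a).isometry.lipschitz)⟩
  refine ⟨C, fun w hw => ?_⟩
  rw [← integral_sub (hφ.integrable_comp_sub_left hK.continuous _)
    (hφ.integrable_comp_sub_left hK.continuous _), ← hC w hw]
  congr 1 with y
  rw [sub_right_comm, sub_add_eq_add_sub]

lemma SmoothlyReflectionless.integral_orbit_add_two_mul {d : ℕ} {μ : Measure (Pt d)}
    [IsLocallyFiniteMeasure μ] (hrefl : SmoothlyReflectionless μ) {φ : Pt d → ℝ}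
    (heven : ∀ v, φ (-v) = φ v) (hφ0 : ∀ v, 0 ≤ φ v) (hφ : HasCompactSupport φ) {K : NNReal}
    (hK : LipschitzWith K φ) {x z : Pt d} (hx : x ∈ msupp μ)
    (hall : ∀ j : ℕ, x + j • z ∈ msupp μ) (n j : ℕ) :
    ∫ y, φ (x + (j + 2 * n) • z - y) ∂μ = ∫ y, φ (x + j • z - y) ∂μ := by
  set g : ℕ → ℝ := fun j => ∫ y, φ (x + j • z - y) ∂μ
  choose D hD using fun n : ℕ => hrefl.exists_integral_sub_integral_eq heven hφ hK (n • z)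
  have hg_sub (n j : ℕ) : g j - g (j + 2 * n) = D n := by
    simpa only [add_add_nsmul_sub_nsmul, add_add_nsmul_add_nsmul] using hD n _ (hall (j + n))
  have hg_add_D (n : ℕ) : 0 ≤ g n + D n := by
    rw [← hD n x hx, add_sub_cancel]
    exact integral_nonneg fun _ => hφ0 _
  have hDn := eq_zero_of_sub_add_two_mul_eq (fun j => integral_nonneg fun _ => hφ0 _)
    hg_sub hg_add_D n
  linarith [hg_sub n j]

/-- If `x ∈ supp μ` and `x + jz ∈ supp μ` for all `j ∈ ℕ`, then the reflectionless constant
of the ball `B(kz, r)` vanishes. -/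
theorem ball_constant_vanishes (d : ℕ) (μ : Measure (Pt d))
    (hloc : IsLocallyFiniteMeasure μ) (hrefl : SmoothlyReflectionless μ)
    (x z : Pt d) (hx : x ∈ msupp μ) (hall : ∀ j : ℕ, x + j • z ∈ msupp μ)
    (r : ℝ) (hr : 0 < r) (k : ℕ) (Λ : ℝ)
    (hΛ : ∀ w ∈ msupp μ,
      (μ (ball (w + k • z) r)).toReal - (μ (ball (w - k • z) r)).toReal = Λ) :
    Λ = 0 := by
  let ψ : ContDiffBump (0 : Pt d) := ⟨r, 2 * r, hr, by linarith⟩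
  obtain ⟨K, hK⟩ := ψ.contDiff.lipschitzWith_of_hasCompactSupport ψ.hasCompactSupport one_ne_zero
  set g : ℕ → ℝ := fun j => ∫ y, ψ (x + j • z - y) ∂μ
  set c : ℕ → ℝ := fun j => μ.real (ball (x + j • z) r)
  have hg_periodic (n : ℕ) : g (2 * n) = g 0 := by
    simpa only [zero_add] using hrefl.integral_orbit_add_two_mul ψ.neg (fun _ => ψ.nonneg) ψ.hasCompactSupport hK
      hx hall n 0
  have hc_le_g (j : ℕ) : c j ≤ g j :=
    measureReal_ball_le_integral (fun _ => ψ.nonneg)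
      (fun _ hv => ψ.one_of_mem_closedBall (ball_subset_closedBall hv))
      (ψ.hasCompactSupport.integrable_comp_sub_left ψ.continuous _)
  have hc_step (j : ℕ) : c (j + 2 * k) = c j + Λ := by
    have := hΛ _ (hall (j + k))
    rw [add_add_nsmul_sub_nsmul, add_add_nsmul_add_nsmul] at this
    simp only [c, measureReal_def]
    linarith
  refine eq_zero_of_forall_add_nat_mul_mem_Icc (a := c 0) (B := g 0) fun m => ?_
  have hcm := apply_add_mul_eq_of_apply_add_eq hc_step m 0
  rw [nsmul_eq_mul, zero_add, mul_left_comm] at hcm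
  rw [← hcm, ← hg_periodic (m * k)]
  exact ⟨measureReal_nonneg, hc_le_g _⟩
end
end
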